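/- arXiv:1810.10445 — 6 statements merged into one kernel-verified Lean document; each statement's English description precedes it below -/
import Mathlib

section
/- The numerical radius parallelism relation is not transitive: with S = diag(1,−1), I the 2×2 identity, and R = [[0,1],[0,0]], one has S ∥_ω I and I ∥_ω R, but for every unimodular λ, ω(S + λR) = √(4+|λ|²)/2 = √5/2 ≠ 3/2 = ω(S) + ω(R), so S is not numerical-radius parallel to R. -/
/-- The numerical radius of a bounded operator on a complex Hilbert space. -/
noncomputable def numRadius {H : Type*} [NormedAddCommGroup H] [InnerProductSpace ℂ H]
    (T : H →L[ℂ] H) : ℝ :=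
  sSup {r : ℝ | ∃ x : H, ‖x‖ = 1 ∧ r = ‖(inner ℂ (T x) x : ℂ)‖}

/-- Numerical radius parallelism: `ω(T + λS) = ω(T) + ω(S)` for some unimodular `λ`. -/
def nrParallel {H : Type*} [NormedAddCommGroup H] [InnerProductSpace ℂ H]
    (T S : H →L[ℂ] H) : Prop :=
  ∃ lam : ℂ, ‖lam‖ = 1 ∧ numRadius (T + lam • S) = numRadius T + numRadius S
lemma numRadius_eq_of {H : Type*} [NormedAddCommGroup H] [InnerProductSpace ℂ H]
    (T : H →L[ℂ] H) (v : ℝ)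
    (hub : ∀ x : H, ‖x‖ = 1 → ‖(inner ℂ (T x) x : ℂ)‖ ≤ v)
    (x₀ : H) (hx₀ : ‖x₀‖ = 1) (hv : ‖(inner ℂ (T x₀) x₀ : ℂ)‖ = v) :
    numRadius T = v := by
  apply IsGreatest.csSup_eq
  exact ⟨⟨x₀, hx₀, hv.symm⟩, by rintro r ⟨x, hx, rfl⟩; exact hub x hx⟩

lemma clm_apply_coord (A : Matrix (Fin 2) (Fin 2) ℂ) (x : EuclideanSpace ℂ (Fin 2)) (i : Fin 2) :
    Matrix.toEuclideanCLM (𝕜 := ℂ) A x i = A.mulVec x i := rfl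

lemma unit_coords (x : EuclideanSpace ℂ (Fin 2)) (hx : ‖x‖ = 1) :
    ‖x 0‖ ^ 2 + ‖x 1‖ ^ 2 = 1 := by
  have h := hx
  rw [EuclideanSpace.norm_eq, Fin.sum_univ_two] at h
  have h2 : (Real.sqrt (‖x 0‖ ^ 2 + ‖x 1‖ ^ 2)) ^ 2 = 1 := by rw [h]; norm_num
  rw [Real.sq_sqrt (by positivity)] at h2
  simpa using h2

lemma mk_vec_norm (a b : ℂ) (h : ‖a‖ ^ 2 + ‖b‖ ^ 2 = 1) :
    ‖(WithLp.equiv 2 (Fin 2 → ℂ)).symm ![a, b]‖ = 1 := by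
  rw [EuclideanSpace.norm_eq, Fin.sum_univ_two]
  simp only [WithLp.equiv_symm_apply, PiLp.toLp_apply, Matrix.cons_val_zero, Matrix.cons_val_one,
    Matrix.head_cons]
  rw [h, Real.sqrt_one]

lemma conj_mul_self (a : ℂ) : (starRingEnd ℂ) a * a = ((‖a‖ ^ 2 : ℝ) : ℂ) := by
  rw [mul_comm, Complex.mul_conj, Complex.normSq_eq_norm_sq]

-- inner product computations
lemma inner_S (x : EuclideanSpace ℂ (Fin 2)) :
    (inner ℂ ((Matrix.toEuclideanCLM (𝕜 := ℂ) !![1, 0; 0, -1]) x) x : ℂ)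
      = ((‖x 0‖ ^ 2 - ‖x 1‖ ^ 2 : ℝ) : ℂ) := by
  have : (inner ℂ ((Matrix.toEuclideanCLM (𝕜 := ℂ) !![1, 0; 0, -1]) x) x : ℂ)
      = (starRingEnd ℂ) (x 0) * x 0 - (starRingEnd ℂ) (x 1) * x 1 := by
    simp [PiLp.inner_apply, RCLike.inner_apply, Fin.sum_univ_two, clm_apply_coord,
      Matrix.mulVec, dotProduct]
    ring
  rw [this, conj_mul_self, conj_mul_self]; push_cast; ring

lemma inner_R (x : EuclideanSpace ℂ (Fin 2)) :
    (inner ℂ ((Matrix.toEuclideanCLM (𝕜 := ℂ) !![0, 1; 0, 0]) x) x : ℂ)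
      = (starRingEnd ℂ) (x 1) * x 0 := by
  simp [PiLp.inner_apply, RCLike.inner_apply, Fin.sum_univ_two, clm_apply_coord,
    Matrix.mulVec, dotProduct]
  ring

lemma nrS : numRadius (Matrix.toEuclideanCLM (𝕜 := ℂ) !![1, 0; 0, -1]) = 1 := by
  apply numRadius_eq_of _ _ ?_ ((WithLp.equiv 2 (Fin 2 → ℂ)).symm ![1, 0])
    (mk_vec_norm 1 0 (by simp)) ?_
  · intro x hx
    have h := unit_coords x hx
    rw [inner_S, Complex.norm_real, Real.norm_eq_abs]
    have h0 : (0:ℝ) ≤ ‖x 0‖ ^ 2 := by positivity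
    have h1 : (0:ℝ) ≤ ‖x 1‖ ^ 2 := by positivity
    rw [abs_le]; constructor <;> linarith
  · rw [inner_S]
    norm_num [WithLp.equiv_symm_apply, PiLp.toLp_apply]

lemma nrId : numRadius (1 : EuclideanSpace ℂ (Fin 2) →L[ℂ] EuclideanSpace ℂ (Fin 2)) = 1 := by
  apply numRadius_eq_of _ _ ?_ ((WithLp.equiv 2 (Fin 2 → ℂ)).symm ![1, 0])
    (mk_vec_norm 1 0 (by simp)) ?_
  · intro x hx
    rw [ContinuousLinearMap.one_apply, inner_self_eq_norm_sq_to_K, hx]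
    norm_num
  · rw [ContinuousLinearMap.one_apply, inner_self_eq_norm_sq_to_K,
      mk_vec_norm 1 0 (by simp)]
    norm_num

lemma nrR : numRadius (Matrix.toEuclideanCLM (𝕜 := ℂ) !![0, 1; 0, 0]) = 1/2 := by
  apply numRadius_eq_of _ _ ?_
    ((WithLp.equiv 2 (Fin 2 → ℂ)).symm ![((Real.sqrt 2)/2 : ℝ), ((Real.sqrt 2)/2 : ℝ)]) ?_ ?_
  · intro x hx
    have h := unit_coords x hx
    rw [inner_R, norm_mul, Complex.norm_conj]
    nlinarith [norm_nonneg (x 0), norm_nonneg (x 1),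
      sq_nonneg (‖x 0‖ - ‖x 1‖)]
  · apply mk_vec_norm
    rw [Complex.norm_real, Real.norm_eq_abs, abs_of_nonneg (by positivity)]
    rw [div_pow, Real.sq_sqrt (by norm_num : (0:ℝ) ≤ 2)]
    norm_num
  · rw [inner_R]
    simp only [WithLp.equiv_symm_apply, PiLp.toLp_apply, Matrix.cons_val_zero, Matrix.cons_val_one,
      Matrix.head_cons, Complex.conj_ofReal]
    rw [← Complex.ofReal_mul, Complex.norm_real, Real.norm_eq_abs, abs_of_nonneg (by positivity)]
    rw [div_mul_div_comm, Real.mul_self_sqrt (by norm_num : (0:ℝ) ≤ 2)]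
    norm_num

lemma nrSId : numRadius ((Matrix.toEuclideanCLM (𝕜 := ℂ) !![1, 0; 0, -1]) +
    (1:ℂ) • (1 : EuclideanSpace ℂ (Fin 2) →L[ℂ] EuclideanSpace ℂ (Fin 2))) = 2 := by
  have key : ∀ x : EuclideanSpace ℂ (Fin 2), ‖x‖ = 1 →
      (inner ℂ (((Matrix.toEuclideanCLM (𝕜 := ℂ) !![1, 0; 0, -1]) +
        (1:ℂ) • (1 : EuclideanSpace ℂ (Fin 2) →L[ℂ] EuclideanSpace ℂ (Fin 2))) x) x : ℂ)
      = ((‖x 0‖ ^ 2 - ‖x 1‖ ^ 2 + 1 : ℝ) : ℂ) := by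
    intro x hx
    rw [ContinuousLinearMap.add_apply, ContinuousLinearMap.smul_apply,
      ContinuousLinearMap.one_apply, inner_add_left, inner_smul_left, inner_S,
      inner_self_eq_norm_sq_to_K, hx]
    push_cast; simp
  apply numRadius_eq_of _ _ ?_ ((WithLp.equiv 2 (Fin 2 → ℂ)).symm ![1, 0])
    (mk_vec_norm 1 0 (by simp)) ?_
  · intro x hx
    have h := unit_coords x hx
    rw [key x hx, Complex.norm_real, Real.norm_eq_abs]
    have h0 : (0:ℝ) ≤ ‖x 0‖ ^ 2 := by positivity
    have h1 : (0:ℝ) ≤ ‖x 1‖ ^ 2 := by positivity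
    rw [abs_le]; constructor <;> linarith
  · rw [key _ (mk_vec_norm 1 0 (by simp))]
    norm_num [WithLp.equiv_symm_apply, PiLp.toLp_apply]

lemma nrIdR : numRadius ((1 : EuclideanSpace ℂ (Fin 2) →L[ℂ] EuclideanSpace ℂ (Fin 2)) +
    (1:ℂ) • (Matrix.toEuclideanCLM (𝕜 := ℂ) !![0, 1; 0, 0])) = 3/2 := by
  have key : ∀ x : EuclideanSpace ℂ (Fin 2), ‖x‖ = 1 →
      (inner ℂ (((1 : EuclideanSpace ℂ (Fin 2) →L[ℂ] EuclideanSpace ℂ (Fin 2)) +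
        (1:ℂ) • (Matrix.toEuclideanCLM (𝕜 := ℂ) !![0, 1; 0, 0])) x) x : ℂ)
      = 1 + (starRingEnd ℂ) (x 1) * x 0 := by
    intro x hx
    rw [ContinuousLinearMap.add_apply, ContinuousLinearMap.smul_apply,
      ContinuousLinearMap.one_apply, inner_add_left, inner_smul_left, inner_R,
      inner_self_eq_norm_sq_to_K, hx]
    push_cast; simp
  have hn : ‖(WithLp.equiv 2 (Fin 2 → ℂ)).symm
      ![((Real.sqrt 2)/2 : ℝ), ((Real.sqrt 2)/2 : ℝ)]‖ = 1 := by
    apply mk_vec_norm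
    rw [Complex.norm_real, Real.norm_eq_abs, abs_of_nonneg (by positivity), div_pow,
      Real.sq_sqrt (by norm_num : (0:ℝ) ≤ 2)]
    norm_num
  apply numRadius_eq_of _ _ ?_ _ hn ?_
  · intro x hx
    have h := unit_coords x hx
    calc ‖_‖ ≤ ‖(1:ℂ)‖ + ‖(starRingEnd ℂ) (x 1) * x 0‖ := by
          rw [key x hx]; exact norm_add_le _ _
      _ ≤ 3/2 := by
          rw [norm_mul, Complex.norm_conj, norm_one]
          nlinarith [norm_nonneg (x 0), norm_nonneg (x 1),
            sq_nonneg (‖x 0‖ - ‖x 1‖)]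
  · rw [key _ hn]
    simp only [WithLp.equiv_symm_apply, PiLp.toLp_apply, Matrix.cons_val_zero, Matrix.cons_val_one,
      Matrix.head_cons, Complex.conj_ofReal]
    rw [← Complex.ofReal_mul, div_mul_div_comm, Real.mul_self_sqrt (by norm_num : (0:ℝ) ≤ 2)]
    rw [show (1 : ℂ) + ((2/(2*2) : ℝ) : ℂ) = ((3/2 : ℝ) : ℂ) by push_cast; ring]
    rw [Complex.norm_real, Real.norm_eq_abs]; norm_num

set_option maxHeartbeats 1000000 in
lemma nrSR (lam : ℂ) (hlam : ‖lam‖ = 1) :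
    numRadius ((Matrix.toEuclideanCLM (𝕜 := ℂ) !![1, 0; 0, -1]) +
      lam • (Matrix.toEuclideanCLM (𝕜 := ℂ) !![0, 1; 0, 0])) = Real.sqrt 5 / 2 := by
  set r : ℝ := Real.sqrt 5 with hr
  have hr0 : (0:ℝ) ≤ r := Real.sqrt_nonneg 5
  have hr2 : r ^ 2 = 5 := Real.sq_sqrt (by norm_num)
  have hrlt : r ≤ 5/2 := by nlinarith
  have key : ∀ x : EuclideanSpace ℂ (Fin 2),
      (inner ℂ (((Matrix.toEuclideanCLM (𝕜 := ℂ) !![1, 0; 0, -1]) +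
        lam • (Matrix.toEuclideanCLM (𝕜 := ℂ) !![0, 1; 0, 0])) x) x : ℂ)
      = ((‖x 0‖ ^ 2 - ‖x 1‖ ^ 2 : ℝ) : ℂ)
        + (starRingEnd ℂ) lam * ((starRingEnd ℂ) (x 1) * x 0) := by
    intro x
    rw [ContinuousLinearMap.add_apply, ContinuousLinearMap.smul_apply,
      inner_add_left, inner_smul_left, inner_S, inner_R]
  -- witness
  set c : ℝ := Real.sqrt ((5 + 2*r)/10) with hc
  set s : ℝ := Real.sqrt ((5 - 2*r)/10) with hs
  have hc0 : (0:ℝ) ≤ c := Real.sqrt_nonneg _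
  have hs0 : (0:ℝ) ≤ s := Real.sqrt_nonneg _
  have hc2 : c ^ 2 = (5 + 2*r)/10 := Real.sq_sqrt (by nlinarith)
  have hs2 : s ^ 2 = (5 - 2*r)/10 := Real.sq_sqrt (by nlinarith)
  have hsc : s * c = r / 10 := by
    have h1 : (s * c) ^ 2 = (r / 10) ^ 2 := by rw [mul_pow, hs2, hc2]; nlinarith
    rw [← Real.sqrt_sq (mul_nonneg hs0 hc0), h1, Real.sqrt_sq (by positivity)]
  have habs_c : ‖lam * (c:ℂ)‖ = c := by
    rw [norm_mul, hlam, Complex.norm_real, Real.norm_eq_abs, abs_of_nonneg hc0, one_mul]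
  have hn : ‖(WithLp.equiv 2 (Fin 2 → ℂ)).symm ![lam * (c:ℂ), ((s:ℝ):ℂ)]‖ = 1 := by
    apply mk_vec_norm
    rw [habs_c, Complex.norm_real, Real.norm_eq_abs, abs_of_nonneg hs0, hc2, hs2]
    ring
  apply numRadius_eq_of _ _ ?_ _ hn ?_
  · intro x hx
    have h := unit_coords x hx
    set A := ‖x 0‖ with hA
    set B := ‖x 1‖ with hB
    have hA0 : 0 ≤ A := norm_nonneg _
    have hB0 : 0 ≤ B := norm_nonneg _
    calc ‖_‖
        ≤ ‖((A ^ 2 - B ^ 2 : ℝ) : ℂ)‖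
          + ‖(starRingEnd ℂ) lam * ((starRingEnd ℂ) (x 1) * x 0)‖ := by
          rw [key x]; exact norm_add_le _ _
      _ = |A ^ 2 - B ^ 2| + A * B := by
          rw [Complex.norm_real, Real.norm_eq_abs, norm_mul, norm_mul, Complex.norm_conj, Complex.norm_conj,
            hlam, one_mul, mul_comm]
      _ ≤ r / 2 := by
          rcases abs_cases (A ^ 2 - B ^ 2) with ⟨he, hge⟩ | ⟨he, hge⟩ <;> rw [he] <;>
            nlinarith [sq_nonneg ((A^2 - B^2)/2 - 2*A*B), sq_nonneg ((B^2 - A^2)/2 - 2*A*B),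
              sq_nonneg (A^2 - B^2 + A*B - r/2), sq_nonneg (B^2 - A^2 + A*B - r/2),
              mul_nonneg hA0 hB0]
  · rw [key]
    simp only [WithLp.equiv_symm_apply, PiLp.toLp_apply, Matrix.cons_val_zero, Matrix.cons_val_one,
      Matrix.head_cons, Complex.conj_ofReal, habs_c, Complex.norm_real, Real.norm_eq_abs,
      abs_of_nonneg hs0]
    have hunit : (starRingEnd ℂ) lam * lam = 1 := by
      rw [Complex.conj_mul', hlam]; norm_num
    have : ((c ^ 2 - s ^ 2 : ℝ) : ℂ) + (starRingEnd ℂ) lam * ((s:ℂ) * (lam * (c:ℂ)))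
        = ((c ^ 2 - s ^ 2 + s * c : ℝ) : ℂ) := by
      push_cast
      calc ((c:ℂ) ^ 2 - (s:ℂ) ^ 2) + (starRingEnd ℂ) lam * ((s:ℂ) * (lam * (c:ℂ)))
          = ((c:ℂ) ^ 2 - (s:ℂ) ^ 2) + ((starRingEnd ℂ) lam * lam) * ((s:ℂ) * (c:ℂ)) := by ring
        _ = (c:ℂ) ^ 2 - (s:ℂ) ^ 2 + (s:ℂ) * (c:ℂ) := by rw [hunit]; ring
    rw [this, Complex.norm_real, Real.norm_eq_abs, hc2, hs2, hsc, abs_of_nonneg (by nlinarith)]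
    nlinarith

theorem nrParallel_not_transitive :
    let S : EuclideanSpace ℂ (Fin 2) →L[ℂ] EuclideanSpace ℂ (Fin 2) :=
      Matrix.toEuclideanCLM (𝕜 := ℂ) !![1, 0; 0, -1]
    let Id : EuclideanSpace ℂ (Fin 2) →L[ℂ] EuclideanSpace ℂ (Fin 2) := 1
    let R : EuclideanSpace ℂ (Fin 2) →L[ℂ] EuclideanSpace ℂ (Fin 2) :=
      Matrix.toEuclideanCLM (𝕜 := ℂ) !![0, 1; 0, 0]
    nrParallel S Id ∧ nrParallel Id R ∧
    (∀ lam : ℂ, ‖lam‖ = 1 →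
      numRadius (S + lam • R) = Real.sqrt 5 / 2) ∧
    numRadius S + numRadius R = 3 / 2 ∧
    ¬ nrParallel S R := by
  intro S Id R
  have hS : numRadius S = 1 := nrS
  have hId : numRadius Id = 1 := nrId
  have hR : numRadius R = 1/2 := nrR
  have hSId : numRadius (S + (1:ℂ) • Id) = 2 := nrSId
  have hIdR : numRadius (Id + (1:ℂ) • R) = 3/2 := nrIdR
  have hSR : ∀ lam : ℂ, ‖lam‖ = 1 →
      numRadius (S + lam • R) = Real.sqrt 5 / 2 := fun lam hl => nrSR lam hl
  refine ⟨⟨1, by simp, ?_⟩, ⟨1, by simp, ?_⟩, hSR, ?_, ?_⟩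
  · rw [hS, hId, hSId]; norm_num
  · rw [hId, hR, hIdR]; norm_num
  · rw [hS, hR]; norm_num
  · rintro ⟨lam, hl, heq⟩
    rw [hS, hR, hSR lam hl] at heq
    nlinarith [Real.sq_sqrt (show (0:ℝ) ≤ 5 by norm_num), Real.sqrt_nonneg 5]
end

section
/- Let H be a finite-dimensional complex Hilbert space and T, S ∈ B(H). Then T ∥_ω S if and only if there exists a unit vector x ∈ H such that |⟨Tx, x⟩⟨Sx, x⟩| = ω(T)ω(S). -/
section aux

variable {H : Type*} [NormedAddCommGroup H] [InnerProductSpace ℂ H]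

lemma numSet_bddAbove (T : H →L[ℂ] H) :
    BddAbove {r : ℝ | ∃ x : H, ‖x‖ = 1 ∧ r = ‖(inner ℂ (T x) x : ℂ)‖} := by
  refine ⟨‖T‖, ?_⟩
  rintro r ⟨x, hx, rfl⟩
  have h1 : ‖(inner ℂ (T x) x : ℂ)‖ ≤ ‖T x‖ * ‖x‖ := by
    exact norm_inner_le_norm _ _
  have h2 : ‖T x‖ ≤ ‖T‖ * ‖x‖ := T.le_opNorm x
  calc ‖(inner ℂ (T x) x : ℂ)‖ ≤ ‖T x‖ * ‖x‖ := h1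
    _ ≤ ‖T‖ * ‖x‖ * ‖x‖ := by gcongr
    _ = ‖T‖ := by rw [hx]; ring

lemma le_numRadius (T : H →L[ℂ] H) {x : H} (hx : ‖x‖ = 1) :
    ‖(inner ℂ (T x) x : ℂ)‖ ≤ numRadius T :=
  le_csSup (numSet_bddAbove T) ⟨x, hx, rfl⟩

lemma numRadius_attained [FiniteDimensional ℂ H] [Nontrivial H] (T : H →L[ℂ] H) :
    ∃ x : H, ‖x‖ = 1 ∧ numRadius T = ‖(inner ℂ (T x) x : ℂ)‖ := by
  have hset : {r : ℝ | ∃ x : H, ‖x‖ = 1 ∧ r = ‖(inner ℂ (T x) x : ℂ)‖} =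
      (fun x : H => ‖(inner ℂ (T x) x : ℂ)‖) '' Metric.sphere (0 : H) 1 := by
    ext r
    simp [mem_sphere_zero_iff_norm, eq_comm]
  have hxex : ∃ x : H, ‖x‖ = 1 := by
    obtain ⟨x, hx⟩ := exists_ne (0 : H)
    exact ⟨(‖x‖ : ℝ)⁻¹ • x, by
      rw [norm_smul, norm_inv, norm_norm, inv_mul_cancel₀ (norm_ne_zero_iff.mpr hx)]⟩
  have hcont : Continuous fun x : H => ‖(inner ℂ (T x) x : ℂ)‖ := by
    apply continuous_norm.comp
    exact Continuous.inner (T.continuous) continuous_id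
  have hcomp : IsCompact ((fun x : H => ‖(inner ℂ (T x) x : ℂ)‖) ''
      Metric.sphere (0 : H) 1) := (isCompact_sphere (0 : H) 1).image hcont
  have hne : ((fun x : H => ‖(inner ℂ (T x) x : ℂ)‖) ''
      Metric.sphere (0 : H) 1).Nonempty := by
    obtain ⟨x, hx⟩ := hxex
    exact ⟨_, ⟨x, mem_sphere_zero_iff_norm.mpr hx, rfl⟩⟩
  have := hcomp.sSup_mem hne
  rw [numRadius, hset]
  obtain ⟨x, hx, hx2⟩ := this
  exact ⟨x, mem_sphere_zero_iff_norm.mp hx, hx2.symm⟩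

lemma inner_add_smul (T S : H →L[ℂ] H) (lam : ℂ) (x : H) :
    (inner ℂ ((T + lam • S) x) x : ℂ) =
      inner ℂ (T x) x + (starRingEnd ℂ) lam * inner ℂ (S x) x := by
  simp [inner_add_left, inner_smul_left, mul_comm]

lemma numRadius_add_smul_le [Nontrivial H] (T S : H →L[ℂ] H) (lam : ℂ)
    (hl : ‖lam‖ = 1) :
    numRadius (T + lam • S) ≤ numRadius T + numRadius S := by
  apply csSup_le
  · obtain ⟨x, hx⟩ := exists_ne (0 : H)
    refine ⟨_, (‖x‖ : ℝ)⁻¹ • x, ?_, rfl⟩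
    rw [norm_smul, norm_inv, norm_norm, inv_mul_cancel₀ (norm_ne_zero_iff.mpr hx)]
  · rintro r ⟨x, hx, rfl⟩
    rw [inner_add_smul]
    calc ‖inner ℂ (T x) x + (starRingEnd ℂ) lam * inner ℂ (S x) x‖
        ≤ ‖(inner ℂ (T x) x : ℂ)‖ +
          ‖(starRingEnd ℂ) lam * inner ℂ (S x) x‖ := norm_add_le _ _
      _ = ‖(inner ℂ (T x) x : ℂ)‖ + ‖(inner ℂ (S x) x : ℂ)‖ := by
          rw [norm_mul, Complex.norm_conj, hl, one_mul]
      _ ≤ numRadius T + numRadius S := add_le_add (le_numRadius T hx) (le_numRadius S hx)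

lemma numRadius_nonneg [Nontrivial H] (T : H →L[ℂ] H) : 0 ≤ numRadius T := by
  obtain ⟨x, hx⟩ := exists_ne (0 : H)
  have hx1 : ‖(‖x‖ : ℝ)⁻¹ • x‖ = 1 := by
    rw [norm_smul, norm_inv, norm_norm, inv_mul_cancel₀ (norm_ne_zero_iff.mpr hx)]
  exact le_trans (norm_nonneg _) (le_numRadius T hx1)

end aux

theorem nrParallel_iff_exists_unit_vector {H : Type*} [NormedAddCommGroup H]
    [InnerProductSpace ℂ H] [FiniteDimensional ℂ H] [Nontrivial H] (T S : H →L[ℂ] H) :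
    nrParallel T S ↔
      ∃ x : H, ‖x‖ = 1 ∧
        ‖(inner ℂ (T x) x : ℂ) * (inner ℂ (S x) x : ℂ)‖ = numRadius T * numRadius S := by
  constructor
  · rintro ⟨lam, hlam, heq⟩
    obtain ⟨x, hx, hval⟩ := numRadius_attained (T + lam • S)
    refine ⟨x, hx, ?_⟩
    set a : ℂ := inner ℂ (T x) x
    set b : ℂ := inner ℂ (S x) x
    have hab : numRadius T + numRadius S = ‖a + (starRingEnd ℂ) lam * b‖ := by
      rw [← heq, hval, inner_add_smul]
    have h1 : ‖a + (starRingEnd ℂ) lam * b‖ ≤ ‖a‖ + ‖b‖ := by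
      calc ‖a + (starRingEnd ℂ) lam * b‖
          ≤ ‖a‖ + ‖(starRingEnd ℂ) lam * b‖ := norm_add_le _ _
        _ = ‖a‖ + ‖b‖ := by rw [norm_mul, Complex.norm_conj, hlam, one_mul]
    have haT : ‖a‖ ≤ numRadius T := le_numRadius T hx
    have hbS : ‖b‖ ≤ numRadius S := le_numRadius S hx
    have haT' : ‖a‖ = numRadius T := by linarith [hab ▸ h1]
    have hbS' : ‖b‖ = numRadius S := by linarith [hab ▸ h1]
    rw [norm_mul, haT', hbS']
  · rintro ⟨x, hx, hprod⟩
    set a : ℂ := inner ℂ (T x) x with ha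
    set b : ℂ := inner ℂ (S x) x with hb
    have haT : ‖a‖ ≤ numRadius T := le_numRadius T hx
    have hbS : ‖b‖ ≤ numRadius S := le_numRadius S hx
    rw [norm_mul] at hprod
    by_cases hT0 : numRadius T = 0
    · -- T has zero numerical radius: all inner products vanish
      have hTz : ∀ y : H, ‖y‖ = 1 → (inner ℂ (T y) y : ℂ) = 0 := by
        intro y hy
        have := le_numRadius T hy
        rw [hT0] at this
        exact norm_eq_zero.mp (le_antisymm this (norm_nonneg _))
      refine ⟨1, by simp, ?_⟩
      have : numRadius (T + (1 : ℂ) • S) = numRadius S := by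
        unfold numRadius
        congr 1
        ext r
        constructor
        · rintro ⟨y, hy, rfl⟩
          exact ⟨y, hy, by rw [inner_add_smul, hTz y hy, map_one, zero_add, one_mul]⟩
        · rintro ⟨y, hy, rfl⟩
          exact ⟨y, hy, by rw [inner_add_smul, hTz y hy, map_one, zero_add, one_mul]⟩
      rw [this, hT0, zero_add]
    by_cases hS0 : numRadius S = 0
    · have hSz : ∀ y : H, ‖y‖ = 1 → (inner ℂ (S y) y : ℂ) = 0 := by
        intro y hy
        have := le_numRadius S hy
        rw [hS0] at this
        exact norm_eq_zero.mp (le_antisymm this (norm_nonneg _))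
      refine ⟨1, by simp, ?_⟩
      have : numRadius (T + (1 : ℂ) • S) = numRadius T := by
        unfold numRadius
        congr 1
        ext r
        constructor
        · rintro ⟨y, hy, rfl⟩
          exact ⟨y, hy, by rw [inner_add_smul, hSz y hy, mul_zero, add_zero]⟩
        · rintro ⟨y, hy, rfl⟩
          exact ⟨y, hy, by rw [inner_add_smul, hSz y hy, mul_zero, add_zero]⟩
      rw [this, hS0, add_zero]
    -- both positive
    have hTpos : 0 < numRadius T := lt_of_le_of_ne (numRadius_nonneg T) (Ne.symm hT0)
    have hSpos : 0 < numRadius S := lt_of_le_of_ne (numRadius_nonneg S) (Ne.symm hS0)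
    have hane : ‖a‖ ≠ 0 := by
      intro h
      rw [h, zero_mul] at hprod
      exact (mul_pos hTpos hSpos).ne' hprod.symm
    have hbne : ‖b‖ ≠ 0 := by
      intro h
      rw [h, mul_zero] at hprod
      exact absurd hprod.symm (ne_of_gt (mul_pos hTpos hSpos))
    have haeq : ‖a‖ = numRadius T := by
      by_contra hne
      have : ‖a‖ < numRadius T := lt_of_le_of_ne haT hne
      have hblt : 0 < ‖b‖ := lt_of_le_of_ne (norm_nonneg b) (Ne.symm hbne)
      have h2 : ‖a‖ * ‖b‖ < numRadius T * numRadius S :=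
        calc ‖a‖ * ‖b‖ < numRadius T * ‖b‖ :=
              mul_lt_mul_of_pos_right this hblt
          _ ≤ numRadius T * numRadius S := mul_le_mul_of_nonneg_left hbS hTpos.le
      exact absurd hprod (ne_of_lt h2)
    have hbeq : ‖b‖ = numRadius S := by
      by_contra hne
      have h1 : ‖b‖ < numRadius S := lt_of_le_of_ne hbS hne
      have : ‖a‖ * ‖b‖ < numRadius T * numRadius S := by
        calc ‖a‖ * ‖b‖ ≤ numRadius T * ‖b‖ := by
              apply mul_le_mul_of_nonneg_right haT (norm_nonneg b)
          _ < numRadius T * numRadius S := by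
              exact mul_lt_mul_of_pos_left h1 hTpos
      exact absurd hprod (ne_of_lt this)
    -- choose lam
    set lam : ℂ := ((starRingEnd ℂ) a * b) / (((‖a‖ : ℝ) : ℂ) * ((‖b‖ : ℝ) : ℂ)) with hlam
    have habs : ‖lam‖ = 1 := by
      rw [hlam, norm_div, norm_mul, Complex.norm_conj, norm_mul, Complex.norm_of_nonneg (norm_nonneg a),
        Complex.norm_of_nonneg (norm_nonneg b), div_self (by positivity)]
    refine ⟨lam, habs, ?_⟩
    have key : (inner ℂ ((T + lam • S) x) x : ℂ) = a * (1 + (‖b‖ / ‖a‖ : ℝ)) := by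
      rw [inner_add_smul, ← ha, ← hb, hlam]
      have hconj : (starRingEnd ℂ) (((starRingEnd ℂ) a * b) /
          (((‖a‖ : ℝ) : ℂ) * ((‖b‖ : ℝ) : ℂ))) =
          (a * (starRingEnd ℂ) b) / (((‖a‖ : ℝ) : ℂ) * ((‖b‖ : ℝ) : ℂ)) := by
        rw [map_div₀, map_mul, map_mul]
        simp [Complex.conj_ofReal]
      rw [hconj]
      have hbb : (starRingEnd ℂ) b * b = ((‖b‖ : ℝ) : ℂ) ^ 2 := by
        rw [mul_comm, Complex.mul_conj, Complex.normSq_eq_norm_sq]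
        push_cast
        ring
      have haC : ((‖a‖ : ℝ) : ℂ) ≠ 0 := Complex.ofReal_ne_zero.mpr hane
      have hbC : ((‖b‖ : ℝ) : ℂ) ≠ 0 := Complex.ofReal_ne_zero.mpr hbne
      push_cast
      field_simp
      rw [mul_assoc, hbb]
      ring
    have hval : ‖(inner ℂ ((T + lam • S) x) x : ℂ)‖ = numRadius T + numRadius S := by
      rw [key, norm_mul]
      have h2 : ‖1 + ((‖b‖ / ‖a‖ : ℝ) : ℂ)‖ =
          1 + ‖b‖ / ‖a‖ := by
        have : (1 : ℂ) + ((‖b‖ / ‖a‖ : ℝ) : ℂ) =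
            (((1 + ‖b‖ / ‖a‖ : ℝ)) : ℂ) := by push_cast; ring
        rw [this, Complex.norm_of_nonneg (by positivity)]
      rw [h2, ← haeq, ← hbeq]
      field_simp
    have hge : numRadius T + numRadius S ≤ numRadius (T + lam • S) := by
      rw [← hval]; exact le_numRadius _ hx
    exact le_antisymm (numRadius_add_smul_le T S lam habs) hge
end

section
/- For nonzero vectors x, y in a complex Hilbert space H, the rank-one operators x⊗x and y⊗y are numerical-radius parallel if and only if x and y are norm-parallel (equivalently, x and y are linearly dependent). -/
/-- The rank-one operator `z ↦ ⟨z, v⟩ u` (inner product linear in `z`). -/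
noncomputable def rankOne {H : Type*} [NormedAddCommGroup H] [InnerProductSpace ℂ H]
    (u v : H) : H →L[ℂ] H :=
  (innerSL ℂ v).smulRight u

section Helpers

variable {H : Type*} [NormedAddCommGroup H] [InnerProductSpace ℂ H]

local notation "⟪" x ", " y "⟫" => @inner ℂ _ _ x y

lemma rankOne_apply (u v z : H) : rankOne u v z = ⟪v, z⟫ • u := by
  simp [rankOne]

lemma inner_rankOne (u v z : H) :
    ⟪rankOne u v z, z⟫ = (starRingEnd ℂ) ⟪v, z⟫ * ⟪u, z⟫ := by
  simp [rankOne_apply, inner_smul_left]; ring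

lemma abs_inner_rankOne_self (w z : H) :
    ‖⟪rankOne w w z, z⟫‖ = ‖⟪w, z⟫‖ ^ 2 := by
  rw [inner_rankOne, norm_mul]
  rw [RCLike.norm_conj, norm_inner_symm, sq]

lemma numRadius_rankOne_self (w : H) (e : H) (he : ‖e‖ = 1) :
    numRadius (rankOne w w) = ‖w‖ ^ 2 := by
  unfold numRadius
  apply le_antisymm
  · have hne : {r : ℝ | ∃ z : H, ‖z‖ = 1 ∧
        r = ‖(inner ℂ ((rankOne w w) z) z : ℂ)‖}.Nonempty := ⟨_, ⟨e, he, rfl⟩⟩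
    refine csSup_le hne ?_
    rintro r ⟨z, hz, rfl⟩
    rw [abs_inner_rankOne_self]
    calc ‖⟪w, z⟫‖ ^ 2 ≤ (‖w‖ * ‖z‖) ^ 2 := by
            gcongr; exact norm_inner_le_norm w z
      _ = ‖w‖ ^ 2 := by rw [hz]; ring
  · rcases eq_or_ne w 0 with rfl | hw
    · have h0 : (0:ℝ) ∈ {r : ℝ | ∃ z : H, ‖z‖ = 1 ∧
          r = ‖(inner ℂ ((rankOne (0:H) 0) z) z : ℂ)‖} :=
        ⟨e, he, by simp [abs_inner_rankOne_self]⟩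
      have hb : BddAbove {r : ℝ | ∃ z : H, ‖z‖ = 1 ∧
          r = ‖(inner ℂ ((rankOne (0:H) 0) z) z : ℂ)‖} :=
        ⟨0, by rintro r ⟨z, hz, rfl⟩; simp [abs_inner_rankOne_self]⟩
      simpa using le_csSup hb h0
    · apply le_csSup
      · refine ⟨‖w‖ ^ 2, ?_⟩
        rintro r ⟨z, hz, rfl⟩
        rw [abs_inner_rankOne_self]
        calc ‖⟪w, z⟫‖ ^ 2 ≤ (‖w‖ * ‖z‖) ^ 2 := by
              gcongr; exact norm_inner_le_norm w z
          _ = ‖w‖ ^ 2 := by rw [hz]; ring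
      · refine ⟨(‖w‖ : ℂ)⁻¹ • w, ?_, ?_⟩
        · simp [norm_smul, inv_mul_cancel₀ (norm_ne_zero_iff.mpr hw)]
        · rw [abs_inner_rankOne_self, inner_smul_right, inner_self_eq_norm_sq_to_K]
          have : ‖w‖ ≠ 0 := norm_ne_zero_iff.mpr hw
          simp only [norm_mul, norm_inv, norm_pow, Complex.norm_real, RCLike.norm_ofReal,
            Real.norm_eq_abs, abs_norm]
          field_simp

lemma nrParallel_of_dep (x : H) (c : ℂ) (hx : x ≠ 0) (hc : c ≠ 0) :
    nrParallel (rankOne x x) (rankOne (c • x) (c • x)) := by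
  set a : ℝ := Real.sqrt (1 + ‖c‖ ^ 2) with ha
  have ha2 : a ^ 2 = 1 + ‖c‖ ^ 2 := Real.sq_sqrt (by positivity)
  have hann : 0 ≤ a := Real.sqrt_nonneg _
  have hop : rankOne x x + (1:ℂ) • rankOne (c • x) (c • x)
      = rankOne ((a:ℂ) • x) ((a:ℂ) • x) := by
    ext z
    simp only [ContinuousLinearMap.add_apply, ContinuousLinearMap.coe_smul',
      Pi.smul_apply, one_smul, rankOne_apply, inner_smul_left, smul_smul]
    rw [← add_smul]
    congr 1
    have h1 : (starRingEnd ℂ) c * c = ((‖c‖ : ℂ)) ^ 2 := by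
      rw [mul_comm, Complex.mul_conj, Complex.normSq_eq_norm_sq]
      push_cast; ring
    have h2 : (starRingEnd ℂ) (a : ℂ) * (a : ℂ) = ((1 : ℂ) + (‖c‖:ℂ)^2) := by
      rw [Complex.conj_ofReal, ← Complex.ofReal_mul, ← sq, ha2]
      push_cast; ring
    rw [mul_comm ((starRingEnd ℂ) c) _, mul_assoc, h1]
    rw [mul_comm ((starRingEnd ℂ) (a:ℂ)) _, mul_assoc, h2]
    ring
  have he : ‖(‖x‖ : ℂ)⁻¹ • x‖ = 1 := by
    simp [norm_smul, inv_mul_cancel₀ (norm_ne_zero_iff.mpr hx)]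
  refine ⟨1, by simp, ?_⟩
  rw [hop, numRadius_rankOne_self _ _ he, numRadius_rankOne_self _ _ he,
    numRadius_rankOne_self _ _ he, norm_smul, norm_smul]
  simp only [Complex.norm_real, Real.norm_eq_abs, abs_of_nonneg hann]
  rw [mul_pow, ha2, mul_pow]
  ring

lemma norm_inner_eq_of_nrParallel {x y : H} (hx : x ≠ 0) (hy : y ≠ 0)
    (h : nrParallel (rankOne x x) (rankOne y y)) : ‖⟪x, y⟫‖ = ‖x‖ * ‖y‖ := by
  obtain ⟨lam, hlam, heq⟩ := h
  have hlam' : ‖lam‖ = 1 := by exact hlam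
  have he : ‖(‖x‖ : ℂ)⁻¹ • x‖ = 1 := by
    simp [norm_smul, inv_mul_cancel₀ (norm_ne_zero_iff.mpr hx)]
  rw [numRadius_rankOne_self _ _ he, numRadius_rankOne_self _ _ he] at heq
  have key : ∀ ε > (0:ℝ),
      Real.sqrt (‖x‖ ^ 2 - ε) * Real.sqrt (‖y‖ ^ 2 - ε) - ε ≤ ‖⟪x, y⟫‖ := by
    intro ε hε
    set T := rankOne x x + lam • rankOne y y with hT
    set A := {r : ℝ | ∃ z : H, ‖z‖ = 1 ∧ r = ‖(inner ℂ (T z) z : ℂ)‖} with hA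
    have hAne : A.Nonempty := ⟨_, ⟨_, he, rfl⟩⟩
    have hsup : sSup A = ‖x‖ ^ 2 + ‖y‖ ^ 2 := heq
    obtain ⟨r, hrA, hr⟩ := exists_lt_of_lt_csSup hAne
      (show ‖x‖ ^ 2 + ‖y‖ ^ 2 - ε < sSup A by rw [hsup]; linarith)
    obtain ⟨z, hz, rfl⟩ := hrA
    -- bound the value
    have hval : ‖(inner ℂ (T z) z : ℂ)‖ ≤ ‖⟪x, z⟫‖ ^ 2 + ‖⟪y, z⟫‖ ^ 2 := by
      have hTz : (inner ℂ (T z) z : ℂ)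
          = (starRingEnd ℂ) ⟪x, z⟫ * ⟪x, z⟫
            + (starRingEnd ℂ) lam * ((starRingEnd ℂ) ⟪y, z⟫ * ⟪y, z⟫) := by
        simp [hT, ContinuousLinearMap.add_apply, inner_add_left, inner_smul_left,
          inner_rankOne]; ring
      rw [hTz]
      calc ‖(starRingEnd ℂ) ⟪x, z⟫ * ⟪x, z⟫
            + (starRingEnd ℂ) lam * ((starRingEnd ℂ) ⟪y, z⟫ * ⟪y, z⟫)‖
          ≤ ‖(starRingEnd ℂ) ⟪x, z⟫ * ⟪x, z⟫‖
            + ‖(starRingEnd ℂ) lam * ((starRingEnd ℂ) ⟪y, z⟫ * ⟪y, z⟫)‖ := norm_add_le _ _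
        _ = ‖⟪x, z⟫‖ ^ 2 + ‖⟪y, z⟫‖ ^ 2 := by
            simp only [norm_mul, RCLike.norm_conj, hlam', sq, one_mul]
    set a := ‖⟪x, z⟫‖ with haa
    set b := ‖⟪y, z⟫‖ with hbb
    have hab : ‖x‖ ^ 2 + ‖y‖ ^ 2 - ε < a ^ 2 + b ^ 2 := lt_of_lt_of_le hr hval
    have haux : a ≤ ‖x‖ := by
      calc a ≤ ‖x‖ * ‖z‖ := norm_inner_le_norm x z
        _ = ‖x‖ := by rw [hz, mul_one]
    have hbux : b ≤ ‖y‖ := by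
      calc b ≤ ‖y‖ * ‖z‖ := norm_inner_le_norm y z
        _ = ‖y‖ := by rw [hz, mul_one]
    have ha2 : ‖x‖ ^ 2 - ε ≤ a ^ 2 := by nlinarith [norm_nonneg (⟪y, z⟫), norm_nonneg y]
    have hb2 : ‖y‖ ^ 2 - ε ≤ b ^ 2 := by nlinarith [norm_nonneg (⟪x, z⟫), norm_nonneg x]
    have hsa : Real.sqrt (‖x‖ ^ 2 - ε) ≤ a := by
      calc Real.sqrt (‖x‖ ^ 2 - ε) ≤ Real.sqrt (a ^ 2) := Real.sqrt_le_sqrt ha2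
        _ = a := Real.sqrt_sq (norm_nonneg _)
    have hsb : Real.sqrt (‖y‖ ^ 2 - ε) ≤ b := by
      calc Real.sqrt (‖y‖ ^ 2 - ε) ≤ Real.sqrt (b ^ 2) := Real.sqrt_le_sqrt hb2
        _ = b := Real.sqrt_sq (norm_nonneg _)
    -- decomposition
    have hzz : (⟪z, z⟫ : ℂ) = 1 := by
      rw [inner_self_eq_norm_sq_to_K, hz]; simp
    set x' := x - ⟪z, x⟫ • z with hx'
    set y' := y - ⟪z, y⟫ • z with hy'
    have re_conj_mul : ∀ t : ℂ, RCLike.re ((starRingEnd ℂ) t * t) = ‖t‖ ^ 2 := by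
      intro t
      rw [mul_comm, Complex.mul_conj]
      simp [Complex.normSq_eq_norm_sq, ← Complex.ofReal_pow]
    have hxnorm : ‖x'‖ ^ 2 = ‖x‖ ^ 2 - a ^ 2 := by
      rw [hx', @norm_sub_sq ℂ, inner_smul_right, norm_smul, hz, mul_one]
      have h1 : (⟪z, x⟫ : ℂ) = (starRingEnd ℂ) ⟪x, z⟫ := (inner_conj_symm z x).symm
      rw [h1, re_conj_mul, RCLike.norm_conj]
      ring
    have hynorm : ‖y'‖ ^ 2 = ‖y‖ ^ 2 - b ^ 2 := by
      rw [hy', @norm_sub_sq ℂ, inner_smul_right, norm_smul, hz, mul_one]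
      have h1 : (⟪z, y⟫ : ℂ) = (starRingEnd ℂ) ⟪y, z⟫ := (inner_conj_symm z y).symm
      rw [h1, re_conj_mul, RCLike.norm_conj]
      ring
    have hinner : (⟪x, y⟫ : ℂ) = ⟪x, z⟫ * ⟪z, y⟫ + ⟪x', y'⟫ := by
      have h1 : (⟪z, x⟫ : ℂ) = (starRingEnd ℂ) ⟪x, z⟫ := (inner_conj_symm z x).symm
      simp only [hx', hy', inner_sub_left, inner_sub_right, inner_smul_left,
        inner_smul_right, hzz, mul_one, h1]
      ring_nf
    have hx'e : ‖x'‖ ^ 2 ≤ ε := by rw [hxnorm]; linarith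
    have hy'e : ‖y'‖ ^ 2 ≤ ε := by rw [hynorm]; linarith
    have hprod : ‖(⟪x', y'⟫ : ℂ)‖ ≤ ε := by
      have h1 : ‖(⟪x', y'⟫ : ℂ)‖ ≤ ‖x'‖ * ‖y'‖ := norm_inner_le_norm x' y'
      have h2 : ‖x'‖ ≤ Real.sqrt ε := Real.le_sqrt_of_sq_le hx'e
      have h3 : ‖y'‖ ≤ Real.sqrt ε := Real.le_sqrt_of_sq_le hy'e
      calc ‖(⟪x', y'⟫ : ℂ)‖ ≤ ‖x'‖ * ‖y'‖ := h1
        _ ≤ Real.sqrt ε * Real.sqrt ε :=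
            mul_le_mul h2 h3 (norm_nonneg _) (Real.sqrt_nonneg _)
        _ = ε := Real.mul_self_sqrt hε.le
    have hub : ‖(⟪x, z⟫ * ⟪z, y⟫ : ℂ)‖ = a * b := by
      rw [norm_mul, norm_inner_symm z y]
    have htri : ‖(⟪x, z⟫ * ⟪z, y⟫ : ℂ)‖ - ‖(⟪x', y'⟫ : ℂ)‖ ≤ ‖(⟪x, y⟫ : ℂ)‖ := by
      have h2 := norm_add_le ((⟪x, z⟫ * ⟪z, y⟫ : ℂ) + ⟪x', y'⟫) (-(⟪x', y'⟫ : ℂ))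
      simp only [add_neg_cancel_right, norm_neg] at h2
      rw [hinner]
      linarith
    have hsqnn : (0:ℝ) ≤ Real.sqrt (‖y‖ ^ 2 - ε) := Real.sqrt_nonneg _
    have hann : (0:ℝ) ≤ a := norm_nonneg _
    have : Real.sqrt (‖x‖ ^ 2 - ε) * Real.sqrt (‖y‖ ^ 2 - ε) ≤ a * b :=
      mul_le_mul hsa hsb hsqnn hann
    rw [hub] at htri
    linarith
  -- take the limit ε → 0⁺
  have hlim : Filter.Tendsto
      (fun ε : ℝ => Real.sqrt (‖x‖ ^ 2 - ε) * Real.sqrt (‖y‖ ^ 2 - ε) - ε)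
      (nhdsWithin 0 (Set.Ioi 0)) (nhds (‖x‖ * ‖y‖)) := by
    have hc : Continuous
        (fun ε : ℝ => Real.sqrt (‖x‖ ^ 2 - ε) * Real.sqrt (‖y‖ ^ 2 - ε) - ε) := by
      fun_prop
    have h0 := (hc.tendsto 0).mono_left
      (nhdsWithin_le_nhds : nhdsWithin (0:ℝ) (Set.Ioi 0) ≤ nhds 0)
    simpa [Real.sqrt_sq (norm_nonneg x), Real.sqrt_sq (norm_nonneg y)] using h0
  have hge : ‖x‖ * ‖y‖ ≤ ‖(⟪x, y⟫ : ℂ)‖ :=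
    le_of_tendsto hlim (eventually_nhdsWithin_of_forall fun ε hε => key ε hε)
  exact le_antisymm (norm_inner_le_norm x y) hge

lemma exists_smul_of_not_linearIndependent {x y : H} (hx : x ≠ 0) (hy : y ≠ 0)
    (h : ¬ LinearIndependent ℂ ![x, y]) : ∃ c : ℂ, c ≠ 0 ∧ y = c • x := by
  rw [linearIndependent_fin2] at h
  push_neg at h
  simp only [Matrix.cons_val_one, Matrix.head_cons, Matrix.cons_val_zero] at h
  rcases h hy with ⟨a, ha⟩
  have ha0 : a ≠ 0 := by rintro rfl; simp at ha; exact hx ha.symm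
  exact ⟨a⁻¹, inv_ne_zero ha0, by rw [← ha, smul_smul, inv_mul_cancel₀ ha0, one_smul]⟩

lemma not_linearIndependent_of_smul {x y : H} (c : ℂ) (hc : c ≠ 0) (hy : y = c • x) :
    ¬ LinearIndependent ℂ ![x, y] := by
  rw [linearIndependent_fin2]
  push_neg
  simp only [Matrix.cons_val_one, Matrix.head_cons, Matrix.cons_val_zero]
  intro hy0
  exact ⟨c⁻¹, by rw [hy, smul_smul, inv_mul_cancel₀ hc, one_smul]⟩

lemma parallel_of_dep {x y : H} (c : ℂ) (hc : c ≠ 0) (hy : y = c • x) :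
    ∃ μ : ℂ, ‖μ‖ = 1 ∧ ‖x + μ • y‖ = ‖x‖ + ‖y‖ := by
  have hcn : ‖c‖ ≠ 0 := norm_ne_zero_iff.mpr hc
  refine ⟨(starRingEnd ℂ) c * (‖c‖ : ℂ)⁻¹, ?_, ?_⟩
  · rw [norm_mul, RCLike.norm_conj, norm_inv, Complex.norm_real, Real.norm_eq_abs, abs_norm]
    exact mul_inv_cancel₀ hcn
  · have hmul : ((starRingEnd ℂ) c * (‖c‖ : ℂ)⁻¹) • y = (‖c‖ : ℂ) • x := by
      rw [hy, smul_smul]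
      congr 1
      rw [mul_assoc, mul_comm ((‖c‖:ℂ))⁻¹ c, ← mul_assoc, Complex.conj_mul']
      push_cast
      rw [sq, mul_assoc, mul_inv_cancel₀ (Complex.ofReal_ne_zero.mpr hcn), mul_one]
    rw [hmul, hy, norm_smul]
    have h1 : x + (‖c‖ : ℂ) • x = ((1 : ℂ) + (‖c‖:ℂ)) • x := by
      rw [add_smul, one_smul]
    rw [h1, norm_smul]
    have h2 : ‖(1 : ℂ) + (‖c‖ : ℂ)‖ = 1 + ‖c‖ := by
      rw [show (1 : ℂ) + (‖c‖ : ℂ) = ((1 + ‖c‖ : ℝ) : ℂ) by push_cast; ring,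
        Complex.norm_real, Real.norm_eq_abs, abs_of_nonneg (by positivity)]
    rw [h2]
    ring

lemma dep_of_parallel {x y : H} (hx : x ≠ 0) (hy : y ≠ 0) (μ : ℂ)
    (hμ : ‖μ‖ = 1) (h : ‖x + μ • y‖ = ‖x‖ + ‖y‖) :
    ∃ c : ℂ, c ≠ 0 ∧ y = c • x := by
  have hμ0 : μ ≠ 0 := by
    intro h0; rw [h0] at hμ; simp at hμ
  set w := μ • y with hw
  have hw0 : w ≠ 0 := smul_ne_zero hμ0 hy
  have hwn : ‖w‖ = ‖y‖ := by
    rw [hw, norm_smul, hμ, one_mul]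
  have hsq : ‖x + w‖ ^ 2 = ‖x‖ ^ 2 + 2 * RCLike.re (⟪x, w⟫ : ℂ) + ‖w‖ ^ 2 :=
    @norm_add_sq ℂ _ _ _ _ x w
  have hre : RCLike.re (⟪x, w⟫ : ℂ) = ‖x‖ * ‖y‖ := by
    rw [h, hwn] at hsq
    ring_nf at hsq
    linarith
  have hle1 : RCLike.re (⟪x, w⟫ : ℂ) ≤ ‖(⟪x, w⟫ : ℂ)‖ := RCLike.re_le_norm _
  have hle2 : ‖(⟪x, w⟫ : ℂ)‖ ≤ ‖x‖ * ‖w‖ := norm_inner_le_norm x w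
  have heq : ‖(⟪x, w⟫ : ℂ)‖ = ‖x‖ * ‖w‖ := by
    refine le_antisymm hle2 ?_
    rw [hwn, ← hre]
    exact hle1
  obtain ⟨r, hr, hrw⟩ := (norm_inner_eq_norm_iff hx hw0).mp heq
  refine ⟨μ⁻¹ * r, mul_ne_zero (inv_ne_zero hμ0) hr, ?_⟩
  rw [mul_smul, ← hrw, hw, smul_smul, inv_mul_cancel₀ hμ0, one_smul]

end Helpers

theorem rankOne_self_nrParallel_iff {H : Type*} [NormedAddCommGroup H]
    [InnerProductSpace ℂ H] (x y : H) (hx : x ≠ 0) (hy : y ≠ 0) :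
    (nrParallel (rankOne x x) (rankOne y y) ↔
      ∃ μ : ℂ, ‖μ‖ = 1 ∧ ‖x + μ • y‖ = ‖x‖ + ‖y‖) ∧
    ((∃ μ : ℂ, ‖μ‖ = 1 ∧ ‖x + μ • y‖ = ‖x‖ + ‖y‖) ↔
      ¬ LinearIndependent ℂ ![x, y]) := by
  constructor
  · constructor
    · intro h
      have hn := norm_inner_eq_of_nrParallel hx hy h
      obtain ⟨r, hr, hry⟩ := (norm_inner_eq_norm_iff hx hy).mp hn
      exact parallel_of_dep r hr hry
    · rintro ⟨μ, hμ, h⟩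
      obtain ⟨c, hc, hcy⟩ := dep_of_parallel hx hy μ hμ h
      rw [hcy]
      exact nrParallel_of_dep x c hx hc
  · constructor
    · rintro ⟨μ, hμ, h⟩
      obtain ⟨c, hc, hcy⟩ := dep_of_parallel hx hy μ hμ h
      exact not_linearIndependent_of_smul c hc hcy
    · intro h
      obtain ⟨c, hc, hcy⟩ := exists_smul_of_not_linearIndependent hx hy h
      exact parallel_of_dep c hc hcy
end

section
/- For a bounded linear operator T on a complex Hilbert space H, if |⟨Tx, x⟩| = ω(T) for every unit vector x ∈ H, then T is a scalar multiple of the identity. -/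
open Complex

section Aux

variable {H : Type*} [NormedAddCommGroup H] [InnerProductSpace ℂ H]

set_option maxHeartbeats 1000000 in
lemma key_alg (a d p q : ℂ) (r : ℝ) (hr : r ≠ 0)
    (ha : Complex.normSq a = r ^ 2) (hd : Complex.normSq d = r ^ 2)
    (hE : ∀ α β : ℂ, Complex.normSq ((Complex.normSq α : ℂ) * a
        + (starRingEnd ℂ) α * β * q + (starRingEnd ℂ) β * α * p
        + (Complex.normSq β : ℂ) * d) = r ^ 2 * (Complex.normSq α + Complex.normSq β) ^ 2) :
    q = 0 ∧ p = 0 ∧ a = d := by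
  have h1 := hE 1 1
  have h2 := hE 1 (-1)
  have h3 := hE 1 I
  have h4 := hE 1 (-I)
  have h5 := hE 2 1
  have h6 := hE 2 (-1)
  have h7 := hE 2 I
  have h8 := hE 2 (-I)
  have h9 := hE (1 + I) I
  simp only [Complex.normSq_apply, Complex.add_re, Complex.add_im, Complex.mul_re,
    Complex.mul_im, Complex.conj_re, Complex.conj_im, Complex.I_re, Complex.I_im,
    Complex.one_re, Complex.one_im, Complex.ofReal_re, Complex.ofReal_im,
    Complex.neg_re, Complex.neg_im, Complex.re_ofNat, Complex.im_ofNat] at h1 h2 h3 h4 h5 h6 h7 h8 h9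
  have ha' : a.re * a.re + a.im * a.im = r ^ 2 := by simpa [Complex.normSq_apply] using ha
  have hd' : d.re * d.re + d.im * d.im = r ^ 2 := by simpa [Complex.normSq_apply] using hd
  have hv : (starRingEnd ℂ) q * p = 0 := by
    apply Complex.ext <;>
      simp only [Complex.mul_re, Complex.mul_im, Complex.conj_re, Complex.conj_im,
        Complex.zero_re, Complex.zero_im]
    · linear_combination (1/8 : ℝ) * h1 + (1/8 : ℝ) * h2 - (1/8 : ℝ) * h3 - (1/8 : ℝ) * h4
    · linear_combination (-1/8 : ℝ) * h1 + (1/24 : ℝ) * h2 - (1/8 : ℝ) * h3 + (1/24 : ℝ) * h4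
        - (1/24 : ℝ) * h5 - (1/24 : ℝ) * h7 + (1/4 : ℝ) * h9 + (1/2 : ℝ) * ha'
  have hu : (starRingEnd ℂ) a * q + a * (starRingEnd ℂ) p = 0 := by
    apply Complex.ext <;>
      simp only [Complex.add_re, Complex.add_im, Complex.mul_re, Complex.mul_im,
        Complex.conj_re, Complex.conj_im, Complex.zero_re, Complex.zero_im]
    · linear_combination (-1/12 : ℝ) * h1 + (1/12 : ℝ) * h2 + (1/24 : ℝ) * h5 - (1/24 : ℝ) * h6
    · linear_combination (-1/6 : ℝ) * h1 - (1/6 : ℝ) * h2 + (1/4 : ℝ) * h3 + (1/12 : ℝ) * h4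
        + (1/24 : ℝ) * h5 + (1/24 : ℝ) * h6 - (1/12 : ℝ) * h7
  have hane : a ≠ 0 := by
    intro h0
    rw [h0, Complex.normSq_zero] at ha
    exact hr (pow_eq_zero_iff two_ne_zero |>.mp ha.symm)
  have hqp : q = 0 ∧ p = 0 := by
    rcases mul_eq_zero.mp hv with hq | hp
    · have hq' : q = 0 := by simpa using hq
      subst hq'
      refine ⟨rfl, ?_⟩
      have : a * (starRingEnd ℂ) p = 0 := by simpa using hu
      rcases mul_eq_zero.mp this with h' | h'
      · exact absurd h' hane
      · simpa using h'
    · subst hp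
      have : (starRingEnd ℂ) a * q = 0 := by simpa using hu
      rcases mul_eq_zero.mp this with h' | h'
      · exact absurd (by simpa using h' : a = 0) hane
      · exact ⟨h', rfl⟩
  obtain ⟨hq, hp⟩ := hqp
  refine ⟨hq, hp, ?_⟩
  subst hq; subst hp
  simp only [Complex.zero_re, Complex.zero_im] at h1
  have h0 : (a.re - d.re) ^ 2 + (a.im - d.im) ^ 2 = 0 := by
    linear_combination 2 * ha' + 2 * hd' - h1
  obtain ⟨e1, e2⟩ := (add_eq_zero_iff_of_nonneg (sq_nonneg _) (sq_nonneg _)).mp h0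
  apply Complex.ext
  · have := pow_eq_zero_iff two_ne_zero |>.mp e1
    linarith [this]
  · have := pow_eq_zero_iff two_ne_zero |>.mp e2
    linarith [this]

lemma inner_expand (T : H →L[ℂ] H) (x y : H) (α β : ℂ) :
    (inner ℂ (T (α • x + β • y)) (α • x + β • y) : ℂ)
      = (Complex.normSq α : ℂ) * (inner ℂ (T x) x : ℂ)
        + (starRingEnd ℂ) α * β * (inner ℂ (T x) y : ℂ)
        + (starRingEnd ℂ) β * α * (inner ℂ (T y) x : ℂ)
        + (Complex.normSq β : ℂ) * (inner ℂ (T y) y : ℂ) := by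
  rw [map_add, map_smul, map_smul, Complex.normSq_eq_conj_mul_self,
    Complex.normSq_eq_conj_mul_self]
  simp only [inner_add_left, inner_add_right, inner_smul_left, inner_smul_right]
  ring

lemma norm_combo_sq {x y : H} (hx : ‖x‖ = 1) (hy : ‖y‖ = 1)
    (hxy : (inner ℂ x y : ℂ) = 0) (α β : ℂ) :
    ‖α • x + β • y‖ ^ 2 = Complex.normSq α + Complex.normSq β := by
  have h1 : (inner ℂ (α • x) (β • y) : ℂ) = 0 := by
    simp [inner_smul_left, inner_smul_right, hxy]
  rw [norm_add_sq (𝕜 := ℂ), h1]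
  simp [norm_smul, hx, hy, mul_pow, Complex.sq_norm]

end Aux

theorem constant_modulus_scalar {H : Type*} [NormedAddCommGroup H]
    [InnerProductSpace ℂ H] (T : H →L[ℂ] H)
    (h : ∀ x : H, ‖x‖ = 1 → ‖(inner ℂ (T x) x : ℂ)‖ = numRadius T) :
    ∃ c : ℂ, T = c • 1 := by
  by_cases htriv : ∀ x : H, x = 0
  · refine ⟨0, ?_⟩
    ext x
    rw [htriv x]
    simp
  push_neg at htriv
  obtain ⟨x₀, hx₀⟩ := htriv
  set r := numRadius T with hrdef
  by_cases hr : r = 0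
  · -- numerical range is zero, so T = 0
    have hz : ∀ x : H, (inner ℂ (T x) x : ℂ) = 0 := by
      intro x
      by_cases hx : x = 0
      · simp [hx]
      · have hu := h ((‖x‖⁻¹ : ℂ) • x) (norm_smul_inv_norm hx)
        rw [hr] at hu
        have h0 : (inner ℂ (T ((‖x‖⁻¹ : ℂ) • x)) ((‖x‖⁻¹ : ℂ) • x) : ℂ) = 0 :=
          norm_eq_zero.mp hu
        rw [map_smul, inner_smul_left, inner_smul_right] at h0
        have hne : ((‖x‖ : ℂ))⁻¹ ≠ 0 := by
          simp [Complex.ofReal_ne_zero, norm_ne_zero_iff.mpr hx]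
        have : ((‖x‖⁻¹ : ℝ) : ℂ) ≠ 0 := by
          simp [Complex.ofReal_ne_zero, norm_ne_zero_iff.mpr hx]
        simpa [hx] using h0
    have hT : (T : H →ₗ[ℂ] H) = 0 := (inner_map_self_eq_zero _).mp hz
    refine ⟨0, ?_⟩
    ext x
    have := LinearMap.ext_iff.mp hT x
    simpa using this
  · -- main case
    have hz : ∀ z : H, ‖(inner ℂ (T z) z : ℂ)‖ = r * ‖z‖ ^ 2 := by
      intro z
      by_cases hzz : z = 0
      · simp [hzz]
      · have hu := h ((‖z‖⁻¹ : ℂ) • z) (norm_smul_inv_norm hzz)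
        rw [map_smul, inner_smul_left, inner_smul_right] at hu
        have hnz : ‖z‖ ≠ 0 := norm_ne_zero_iff.mpr hzz
        simp only [norm_mul, Complex.norm_conj, norm_inv, Complex.norm_real,
          norm_norm] at hu
        field_simp at hu
        rw [mul_comm] at hu
        rw [hu]
    have key : ∀ x y : H, ‖x‖ = 1 → ‖y‖ = 1 → (inner ℂ x y : ℂ) = 0 →
        (inner ℂ (T x) y : ℂ) = 0 ∧ (inner ℂ (T y) x : ℂ) = 0 ∧
          (inner ℂ (T x) x : ℂ) = (inner ℂ (T y) y : ℂ) := by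
      intro x y hx hy hxy
      have ha : Complex.normSq (inner ℂ (T x) x : ℂ) = r ^ 2 := by
        rw [← Complex.sq_norm, h x hx, hrdef]
      have hd : Complex.normSq (inner ℂ (T y) y : ℂ) = r ^ 2 := by
        rw [← Complex.sq_norm, h y hy, hrdef]
      have hE : ∀ α β : ℂ, Complex.normSq ((Complex.normSq α : ℂ) * (inner ℂ (T x) x : ℂ)
          + (starRingEnd ℂ) α * β * (inner ℂ (T x) y : ℂ)
          + (starRingEnd ℂ) β * α * (inner ℂ (T y) x : ℂ)
          + (Complex.normSq β : ℂ) * (inner ℂ (T y) y : ℂ))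
          = r ^ 2 * (Complex.normSq α + Complex.normSq β) ^ 2 := by
        intro α β
        rw [← inner_expand T x y α β, ← Complex.sq_norm, hz (α • x + β • y),
          mul_pow, norm_combo_sq hx hy hxy]
      exact key_alg _ _ _ _ r hr ha hd hE
    -- orthogonality of T x to x-perp
    have horth : ∀ x y : H, ‖x‖ = 1 → (inner ℂ x y : ℂ) = 0 → (inner ℂ (T x) y : ℂ) = 0 := by
      intro x y hx hxy
      by_cases hy : y = 0
      · simp [hy]
      · have hxy' : (inner ℂ x ((‖y‖⁻¹ : ℂ) • y) : ℂ) = 0 := by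
          rw [inner_smul_right, hxy, mul_zero]
        have h1 := (key x ((‖y‖⁻¹ : ℂ) • y) hx (norm_smul_inv_norm hy) hxy').1
        rw [inner_smul_right] at h1
        rcases mul_eq_zero.mp h1 with h' | h'
        · exact absurd h' (by simp [Complex.ofReal_ne_zero, norm_ne_zero_iff.mpr hy])
        · exact h'
    -- eigenvector property
    have heig : ∀ x : H, ‖x‖ = 1 →
        T x = ((starRingEnd ℂ) (inner ℂ (T x) x : ℂ)) • x := by
      intro x hx
      set c : ℂ := (inner ℂ (T x) x : ℂ) with hc
      set w : H := T x - (starRingEnd ℂ) c • x with hwdef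
      have hxx : (inner ℂ x x : ℂ) = 1 := by
        rw [inner_self_eq_norm_sq_to_K, hx]; norm_num
      have hw : ∀ z : H, (inner ℂ w z : ℂ) = 0 := by
        intro z
        have hperp : (inner ℂ x (z - (inner ℂ x z : ℂ) • x) : ℂ) = 0 := by
          rw [inner_sub_right, inner_smul_right, hxx, mul_one, sub_self]
        have hTx : (inner ℂ (T x) (z - (inner ℂ x z : ℂ) • x) : ℂ) = 0 :=
          horth x _ hx hperp
        have hwx : (inner ℂ w x : ℂ) = 0 := by
          simp [hwdef, inner_sub_left, inner_smul_left, hxx, Complex.conj_conj, ← hc, hx]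
        have hwh : (inner ℂ w (z - (inner ℂ x z : ℂ) • x) : ℂ) = 0 := by
          rw [hwdef, inner_sub_left, inner_smul_left, hTx, hperp, mul_zero, sub_zero]
        have hzdec : z = (inner ℂ x z : ℂ) • x + (z - (inner ℂ x z : ℂ) • x) := by
          abel
        conv_lhs => rw [hzdec]
        rw [inner_add_right, inner_smul_right, hwx, hwh, mul_zero, add_zero]
      have : w = 0 := by
        have := hw w
        exact inner_self_eq_zero.mp this
      rw [hwdef, sub_eq_zero] at this
      exact this
    -- constancy of the numerical range value
    have hee : (inner ℂ x₀ x₀ : ℂ) ≠ 0 := by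
      rw [inner_self_ne_zero]; exact hx₀
    set e : H := (‖x₀‖⁻¹ : ℂ) • x₀ with hedef
    have he : ‖e‖ = 1 := norm_smul_inv_norm hx₀
    clear_value e
    have hconst : ∀ x : H, ‖x‖ = 1 → (inner ℂ (T x) x : ℂ) = (inner ℂ (T e) e : ℂ) := by
      intro x hx
      have heee : (inner ℂ e e : ℂ) = 1 := by
        rw [inner_self_eq_norm_sq_to_K, he]; norm_num
      set μ : ℂ := (inner ℂ e x : ℂ) with hμ
      by_cases hdep : x - μ • e = 0
      · -- x is a unimodular multiple of e
        rw [sub_eq_zero] at hdep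
        have hμ1 : ‖μ‖ = 1 := by
          have : ‖x‖ = ‖μ‖ * ‖e‖ := by rw [hdep, norm_smul]
          rw [hx, he, mul_one] at this
          rw [← this]
        rw [hdep, map_smul, inner_smul_left, inner_smul_right]
        rw [← mul_assoc, ← Complex.normSq_eq_conj_mul_self]
        rw [← Complex.sq_norm, hμ1]
        norm_num
      · set ν : ℝ := ‖x - μ • e‖ with hν
        have hνne : ν ≠ 0 := by
          rw [hν]; exact norm_ne_zero_iff.mpr hdep
        set y : H := (ν⁻¹ : ℂ) • (x - μ • e) with hydef
        have hy : ‖y‖ = 1 := norm_smul_inv_norm hdep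
        have hey : (inner ℂ e y : ℂ) = 0 := by
          rw [hydef, inner_smul_right, inner_sub_right, inner_smul_right, heee,
            mul_one, hμ, sub_self, mul_zero]
        obtain ⟨hq0, hp0, had⟩ := key e y he hy hey
        have hxrep : x = μ • e + (ν : ℂ) • y := by
          rw [hydef, smul_smul]
          rw [mul_inv_cancel₀ (by exact_mod_cast hνne : (ν : ℂ) ≠ 0)]
          rw [one_smul]
          abel
        have hnormx : Complex.normSq μ + Complex.normSq (ν : ℂ) = 1 := by
          have h2 := norm_combo_sq he hy hey μ (ν : ℂ)
          rw [← hxrep, hx] at h2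
          rw [← h2]; norm_num
        calc (inner ℂ (T x) x : ℂ)
            = (Complex.normSq μ : ℂ) * (inner ℂ (T e) e : ℂ)
              + (starRingEnd ℂ) μ * (ν : ℂ) * (inner ℂ (T e) y : ℂ)
              + (starRingEnd ℂ) (ν : ℂ) * μ * (inner ℂ (T y) e : ℂ)
              + (Complex.normSq (ν : ℂ) : ℂ) * (inner ℂ (T y) y : ℂ) := by
              conv_lhs => rw [hxrep]
              exact inner_expand T e y μ (ν : ℂ)
          _ = (inner ℂ (T e) e : ℂ) := by
              rw [hq0, hp0, ← had]
              have hc1 : ((Complex.normSq μ : ℂ) + (Complex.normSq (ν : ℂ) : ℂ)) = 1 := by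
                exact_mod_cast hnormx
              linear_combination (inner ℂ (T e) e : ℂ) * hc1
    refine ⟨(starRingEnd ℂ) (inner ℂ (T e) e : ℂ), ?_⟩
    ext z
    by_cases hzz : z = 0
    · simp [hzz]
    · have hu : ‖(‖z‖⁻¹ : ℂ) • z‖ = 1 := norm_smul_inv_norm hzz
      have h1 := heig _ hu
      rw [hconst _ hu] at h1
      have hzrep : z = (‖z‖ : ℂ) • ((‖z‖⁻¹ : ℂ) • z) := by
        rw [smul_smul, mul_inv_cancel₀ (by exact_mod_cast norm_ne_zero_iff.mpr hzz : ((‖z‖ : ℝ) : ℂ) ≠ 0), one_smul]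
      conv_lhs => rw [hzrep]
      rw [map_smul, h1]
      simp only [smul_smul, ContinuousLinearMap.smul_apply, ContinuousLinearMap.one_apply]
      congr 1
      have hne : ((‖z‖ : ℝ) : ℂ) ≠ 0 := by
        exact_mod_cast norm_ne_zero_iff.mpr hzz
      field_simp
end

section
/- For any vectors x, y in a complex Hilbert space H, ω(x⊗y) = (|⟨x, y⟩| + ‖x‖‖y‖)/2 and ‖x⊗y‖ = ‖x‖‖y‖. -/
section Aux

open ComplexConjugate

variable {H : Type*} [NormedAddCommGroup H] [InnerProductSpace ℂ H]

private lemma hw_sq (x e : H) (he : ‖e‖ = 1) :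
    ‖(2 * (inner ℂ e x : ℂ)) • e - x‖ ^ 2 = ‖x‖ ^ 2 := by
  rw [@norm_sub_sq ℂ]
  rw [inner_smul_left, norm_smul]
  simp only [he, mul_one, map_mul, Complex.conj_ofNat, mul_assoc, Complex.conj_mul',
    norm_mul, Complex.sq_norm, ← Complex.ofReal_pow, Complex.ofReal_re]
  norm_num [← Complex.ofReal_pow, Complex.normSq_eq_norm_sq]
  ring

private lemma hw_inner (x y e : H) : (inner ℂ ((2 * (inner ℂ e x : ℂ)) • e - x) y : ℂ)
    = 2 * (inner ℂ x e : ℂ) * (inner ℂ e y : ℂ) - (inner ℂ x y : ℂ) := by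
  rw [inner_sub_left, inner_smul_left]
  rw [map_mul, ← inner_conj_symm x e, Complex.conj_ofNat]

/-- Buzano's inequality. -/
private lemma buzano_aux (x y e : H) (he : ‖e‖ = 1) :
    2 * (‖(inner ℂ x e : ℂ)‖ * ‖(inner ℂ e y : ℂ)‖)
      ≤ ‖(inner ℂ x y : ℂ)‖ + ‖x‖ * ‖y‖ := by
  set w : H := (2 * (inner ℂ e x : ℂ)) • e - x with hw
  have hnw : ‖w‖ = ‖x‖ := by
    have h1 : ‖w‖ ^ 2 = ‖x‖ ^ 2 := hw_sq x e he
    nlinarith [norm_nonneg w, norm_nonneg x]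
  have hkey : ‖2 * (inner ℂ x e : ℂ) * (inner ℂ e y : ℂ) - (inner ℂ x y : ℂ)‖
      ≤ ‖x‖ * ‖y‖ := by
    calc ‖2 * (inner ℂ x e : ℂ) * (inner ℂ e y : ℂ) - (inner ℂ x y : ℂ)‖
        = ‖(inner ℂ w y : ℂ)‖ := by rw [hw_inner x y e]
      _ ≤ ‖w‖ * ‖y‖ := norm_inner_le_norm w y
      _ = ‖x‖ * ‖y‖ := by rw [hnw]
  have htri : ‖2 * (inner ℂ x e : ℂ) * (inner ℂ e y : ℂ)‖
      ≤ ‖2 * (inner ℂ x e : ℂ) * (inner ℂ e y : ℂ) - (inner ℂ x y : ℂ)‖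
        + ‖(inner ℂ x y : ℂ)‖ := by
    simpa using norm_add_le (2 * (inner ℂ x e : ℂ) * (inner ℂ e y : ℂ) - (inner ℂ x y : ℂ))
      (inner ℂ x y : ℂ)
  have habs : ‖2 * (inner ℂ x e : ℂ) * (inner ℂ e y : ℂ)‖
      = 2 * (‖(inner ℂ x e : ℂ)‖ * ‖(inner ℂ e y : ℂ)‖) := by
    rw [norm_mul, norm_mul]; norm_num; ring
  linarith

private lemma inner_self_c (x : H) : (inner ℂ x x : ℂ) = ((‖x‖:ℝ):ℂ)^2 := by
  exact_mod_cast inner_self_eq_norm_sq_to_K x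

private lemma aux1 (x y : H) (lam : ℂ) (c : ℝ) (h : lam * inner ℂ x y = (c:ℂ)) :
    (inner ℂ x ((((‖y‖:ℝ):ℂ)) • x + (lam * (‖x‖:ℝ)) • y) : ℂ)
      = ((‖x‖ * (‖x‖*‖y‖ + c) : ℝ) : ℂ) := by
  rw [inner_add_right, inner_smul_right, inner_smul_right, inner_self_c]
  rw [mul_comm lam, mul_assoc, h]
  push_cast
  ring

private lemma aux2 (x y : H) (lam : ℂ) (c : ℝ) (hc : conj (inner ℂ x y : ℂ) = (c:ℂ) * lam) :
    (inner ℂ y ((((‖y‖:ℝ):ℂ)) • x + (lam * (‖x‖:ℝ)) • y) : ℂ)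
      = lam * ((‖y‖ * (‖x‖*‖y‖ + c) : ℝ) : ℂ) := by
  rw [inner_add_right, inner_smul_right, inner_smul_right, inner_self_c,
    ← inner_conj_symm y x, hc]
  push_cast
  ring

private lemma aux3 (x y : H) (lam : ℂ) (c : ℝ) (hlam : ‖lam‖ = 1)
    (h : lam * inner ℂ x y = (c:ℂ)) :
    ‖(((‖y‖:ℝ):ℂ)) • x + (lam * (‖x‖:ℝ)) • y‖ ^ 2
      = 2 * (‖x‖*‖y‖) * (‖x‖*‖y‖ + c) := by
  rw [@norm_add_sq ℂ]
  rw [inner_smul_left, inner_smul_right, norm_smul, norm_smul]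
  simp only [norm_mul, Complex.norm_real, Real.norm_eq_abs, hlam, one_mul,
    Complex.conj_ofReal]
  rw [mul_comm lam, mul_assoc, mul_assoc, h]
  simp only [abs_norm]
  rw [show ((‖y‖:ℝ):ℂ) * (((‖x‖:ℝ):ℂ) * (c:ℂ)) = (((‖y‖*‖x‖*c : ℝ)):ℂ) by push_cast; ring]
  simp
  ring

private lemma rankOne_inner (x y z : H) :
    ‖(inner ℂ ((rankOne x y) z) z : ℂ)‖
      = ‖(inner ℂ y z : ℂ)‖ * ‖(inner ℂ x z : ℂ)‖ := by
  have : (rankOne x y) z = (inner ℂ y z : ℂ) • x := by simp [rankOne]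
  rw [this, inner_smul_left, norm_mul, Complex.norm_conj]

end Aux

theorem numRadius_norm_rankOne {H : Type*} [NormedAddCommGroup H]
    [InnerProductSpace ℂ H] (x y : H) :
    numRadius (rankOne x y) = (‖(inner ℂ x y : ℂ)‖ + ‖x‖ * ‖y‖) / 2 ∧
    ‖rankOne x y‖ = ‖x‖ * ‖y‖ := by
  constructor
  · set S := {r : ℝ | ∃ z : H, ‖z‖ = 1 ∧ r = ‖(inner ℂ ((rankOne x y) z) z : ℂ)‖}
      with hS
    have hub : ∀ r ∈ S, r ≤ (‖(inner ℂ x y : ℂ)‖ + ‖x‖ * ‖y‖) / 2 := by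
      rintro r ⟨z, hz, rfl⟩
      rw [rankOne_inner]
      have h := buzano_aux x y z hz
      have h2 : ‖(inner ℂ z y : ℂ)‖ = ‖(inner ℂ y z : ℂ)‖ := by
        rw [← inner_conj_symm y z, Complex.norm_conj]
      rw [h2] at h
      linarith
    by_cases hx : x = 0
    · have hSsub : S ⊆ {0} := by
        rintro r ⟨z, hz, rfl⟩
        simp [rankOne_inner, hx]
      have : ‖(inner ℂ x y : ℂ)‖ = 0 := by simp [hx]
      rw [numRadius, ← hS, this, hx]
      rcases Set.subset_singleton_iff_eq.mp hSsub with h | h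
      · simp [h, Real.sSup_empty]
      · simp [h]
    by_cases hy : y = 0
    · have hSsub : S ⊆ {0} := by
        rintro r ⟨z, hz, rfl⟩
        simp [rankOne_inner, hy]
      have : ‖(inner ℂ x y : ℂ)‖ = 0 := by simp [hy]
      rw [numRadius, ← hS, this, hy]
      rcases Set.subset_singleton_iff_eq.mp hSsub with h | h
      · simp [h, Real.sSup_empty]
      · simp [h]
    -- main case
    set c : ℝ := ‖(inner ℂ x y : ℂ)‖ with hc
    set N : ℝ := ‖x‖ * ‖y‖ with hN
    have hxn : (0:ℝ) < ‖x‖ := norm_pos_iff.mpr hx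
    have hyn : (0:ℝ) < ‖y‖ := norm_pos_iff.mpr hy
    have hNpos : 0 < N := mul_pos hxn hyn
    have hcnn : 0 ≤ c := norm_nonneg _
    set lam : ℂ := if (inner ℂ x y : ℂ) = 0 then 1 else (c:ℂ) / (inner ℂ x y : ℂ) with hlamdef
    have hlam1 : ‖lam‖ = 1 := by
      rw [hlamdef]
      split_ifs with h
      · simp
      · rw [norm_div, Complex.norm_real, Real.norm_eq_abs, abs_of_nonneg hcnn, hc]
        field_simp [norm_ne_zero_iff.mpr h]
    have hlam2 : lam * (inner ℂ x y : ℂ) = (c:ℂ) := by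
      rw [hlamdef]
      split_ifs with h
      · simp [h, hc]
      · field_simp
    have hconj : (starRingEnd ℂ) (inner ℂ x y : ℂ) = (c:ℂ) * lam := by
      have h1 : (c:ℂ) * lam * (inner ℂ x y : ℂ) = (c:ℂ) * (c:ℂ) := by
        rw [mul_assoc, hlam2]
      have h2 : (starRingEnd ℂ) (inner ℂ x y : ℂ) * (inner ℂ x y : ℂ)
          = (c:ℂ) * (c:ℂ) := by
        rw [Complex.conj_mul']
        push_cast [hc]
        ring
      by_cases h : (inner ℂ x y : ℂ) = 0
      · simp [h, show c = 0 by simp [hc, h]]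
      · exact mul_right_cancel₀ h (by rw [h2, h1])
    set z₀ : H := (((‖y‖:ℝ):ℂ)) • x + (lam * (‖x‖:ℝ)) • y with hz₀
    have hz0sq : ‖z₀‖ ^ 2 = 2 * N * (N + c) := aux3 x y lam c hlam1 hlam2
    have hz0pos : 0 < ‖z₀‖ := by
      have h : 0 < ‖z₀‖ ^ 2 := by rw [hz0sq]; positivity
      nlinarith [norm_nonneg z₀]
    set z : H := ((‖z₀‖:ℝ):ℂ)⁻¹ • z₀ with hzdef
    have hz1 : ‖z‖ = 1 := by
      rw [hzdef, norm_smul]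
      simp [norm_inv, hz0pos.ne']
    have hxNc : (0:ℝ) ≤ ‖x‖ * (‖x‖ * ‖y‖ + c) :=
      mul_nonneg (norm_nonneg x) (by nlinarith)
    have hyNc : (0:ℝ) ≤ ‖y‖ * (‖x‖ * ‖y‖ + c) :=
      mul_nonneg (norm_nonneg y) (by nlinarith)
    have hix : ‖(inner ℂ x z : ℂ)‖ = ‖z₀‖⁻¹ * (‖x‖ * (N + c)) := by
      rw [hzdef, inner_smul_right, norm_mul, aux1 x y lam c hlam2, norm_inv,
        Complex.norm_real, Real.norm_eq_abs, abs_of_nonneg hz0pos.le, Complex.norm_real, Real.norm_eq_abs,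
        abs_of_nonneg hxNc, hN]
    have hiy : ‖(inner ℂ y z : ℂ)‖ = ‖z₀‖⁻¹ * (‖y‖ * (N + c)) := by
      rw [hzdef, inner_smul_right, norm_mul, aux2 x y lam c hconj, norm_mul, hlam1, norm_inv,
        Complex.norm_real, Real.norm_eq_abs, abs_of_nonneg hz0pos.le, Complex.norm_real, Real.norm_eq_abs,
        abs_of_nonneg hyNc, hN]
      ring
    have hmem : (c + N) / 2 ∈ S := by
      refine ⟨z, hz1, ?_⟩
      rw [rankOne_inner, hix, hiy]
      have hNc : 0 < N + c := by linarith
      have h2 : ‖z₀‖⁻¹ * ‖z₀‖⁻¹ = (2 * N * (N + c))⁻¹ := by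
        rw [← mul_inv, ← hz0sq]; ring_nf
      have : ‖z₀‖⁻¹ * (‖y‖ * (N + c)) * (‖z₀‖⁻¹ * (‖x‖ * (N + c)))
          = (2 * N * (N + c))⁻¹ * (N * (N + c) ^ 2) := by
        rw [show ‖z₀‖⁻¹ * (‖y‖ * (N + c)) * (‖z₀‖⁻¹ * (‖x‖ * (N + c)))
            = (‖z₀‖⁻¹ * ‖z₀‖⁻¹) * ((‖x‖ * ‖y‖) * (N + c) ^ 2) from by ring, h2, hN]
      rw [this]
      field_simp
      ring
    have hgr : IsGreatest S ((c + N) / 2) := ⟨hmem, fun r hr => hub r hr⟩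
    rw [numRadius, ← hS, hgr.csSup_eq]
  · rw [rankOne, ContinuousLinearMap.norm_smulRight_apply, innerSL_apply_norm, mul_comm]
end

section
/- If T, S are bounded linear operators on a complex Hilbert space with ‖T + e^{2iθ}S‖ = ‖T‖ + ‖S‖ for some real θ, then the operator matrix [[0, e^{iθ}T],[e^{−iθ}S*, 0]] acting on H ⊕ H has numerical radius exactly (‖T‖ + ‖S‖)/2. -/
/-- The off-diagonal operator matrix `[[0, A],[B, 0]]` acting on `H ⊕₂ H`. -/
noncomputable def offDiag {H : Type*} [NormedAddCommGroup H] [InnerProductSpace ℂ H]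
    (A B : H →L[ℂ] H) : WithLp 2 (H × H) →L[ℂ] WithLp 2 (H × H) :=
  ((WithLp.prodContinuousLinearEquiv 2 ℂ H H).symm : (H × H) →L[ℂ] WithLp 2 (H × H)).comp
    (((A.comp (ContinuousLinearMap.snd ℂ H H)).prod
        (B.comp (ContinuousLinearMap.fst ℂ H H))).comp
      ((WithLp.prodContinuousLinearEquiv 2 ℂ H H : WithLp 2 (H × H) →L[ℂ] (H × H))))

theorem phase_lemma (a b : ℂ) : ∃ μ : ℂ, ‖μ‖ = 1 ∧
    ‖(μ * a + (starRingEnd ℂ μ) * b)‖ = ‖a‖ + ‖b‖ := by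
  refine ⟨Complex.exp (((b.arg - a.arg)/2 : ℝ) * Complex.I), by simp [Complex.norm_exp], ?_⟩
  set φ : ℝ := (b.arg - a.arg)/2 with hφ
  have ha := Complex.norm_mul_exp_arg_mul_I a
  have hb := Complex.norm_mul_exp_arg_mul_I b
  have hconj : (starRingEnd ℂ) (Complex.exp ((φ : ℝ) * Complex.I))
      = Complex.exp (-((φ : ℝ) * Complex.I)) := by
    rw [← Complex.exp_conj]
    congr 1
    simp [Complex.conj_ofReal]
  have key : Complex.exp ((φ:ℝ) * Complex.I) * a + Complex.exp (-((φ:ℝ) * Complex.I)) * b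
      = ((‖a‖ + ‖b‖ : ℝ) : ℂ)
        * Complex.exp ((((a.arg + b.arg)/2 : ℝ)) * Complex.I) := by
    conv_lhs => rw [← ha, ← hb]
    rw [mul_comm _ ((‖a‖ : ℂ) * _), mul_comm _ ((‖b‖ : ℂ) * _),
      mul_assoc, mul_assoc, ← Complex.exp_add, ← Complex.exp_add]
    have h1 : (a.arg : ℂ) * Complex.I + (φ:ℝ) * Complex.I
        = (((a.arg + b.arg)/2 : ℝ)) * Complex.I := by
      rw [hφ]; push_cast; ring
    have h2 : (b.arg : ℂ) * Complex.I + -((φ:ℝ) * Complex.I)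
        = (((a.arg + b.arg)/2 : ℝ)) * Complex.I := by
      rw [hφ]; push_cast; ring
    rw [h1, h2, ← add_mul]
    push_cast
    ring
  rw [hconj, key, norm_mul, Complex.norm_exp]
  simp only [Complex.norm_real, Real.norm_eq_abs, Complex.mul_re, Complex.I_re, Complex.ofReal_re, Complex.I_im,
    Complex.ofReal_im, mul_zero, mul_one, zero_sub, sub_zero, neg_zero, zero_mul]
  rw [Real.exp_zero, mul_one, _root_.abs_of_nonneg (by positivity)]

theorem numRadius_offDiag_of_norm_parallel {H : Type*} [NormedAddCommGroup H]
    [InnerProductSpace ℂ H] [CompleteSpace H] (T S : H →L[ℂ] H) (θ : ℝ)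
    (h : ‖T + Complex.exp (2 * θ * Complex.I) • S‖ = ‖T‖ + ‖S‖) :
    numRadius (offDiag (Complex.exp (θ * Complex.I) • T)
        (Complex.exp (-θ * Complex.I) • ContinuousLinearMap.adjoint S))
      = (‖T‖ + ‖S‖) / 2 := by
  classical
  set eθ : ℂ := Complex.exp (θ * Complex.I) with heθ
  have heθ_ne : eθ ≠ 0 := Complex.exp_ne_zero _
  have heθ_abs : ‖eθ‖ = 1 := by simp [heθ, Complex.norm_exp]
  have hneg : Complex.exp (-θ * Complex.I) = eθ⁻¹ := by
    rw [heθ, ← Complex.exp_neg]; congr 1; push_cast; ring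
  have hconj_eθ : (starRingEnd ℂ) eθ = eθ⁻¹ := by
    rw [heθ, ← Complex.exp_conj, ← Complex.exp_neg]
    congr 1
    simp [Complex.conj_ofReal]
  set A : H →L[ℂ] H := eθ • T with hA
  set B : H →L[ℂ] H := Complex.exp (-θ * Complex.I) • ContinuousLinearMap.adjoint S with hB
  set M := offDiag A B with hM
  have hAn : ‖A‖ = ‖T‖ := by rw [hA, norm_smul]; simp [heθ_abs]
  have hBn : ‖B‖ = ‖S‖ := by
    rw [hB, norm_smul]
    have h2 : ‖ContinuousLinearMap.adjoint S‖ = ‖S‖ :=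
      LinearIsometryEquiv.norm_map ContinuousLinearMap.adjoint S
    rw [h2, hneg]
    simp [heθ_abs]
  -- the inner product formula
  have hval : ∀ z : WithLp 2 (H × H), (inner ℂ (M z) z : ℂ)
      = inner ℂ (A z.snd) z.fst + inner ℂ (B z.fst) z.snd := by
    intro z
    simp [hM, offDiag, WithLp.prod_inner_apply]
  -- upper bound for every unit vector
  have hbound : ∀ z : WithLp 2 (H × H), ‖z‖ = 1 →
      ‖(inner ℂ (M z) z : ℂ)‖ ≤ (‖T‖ + ‖S‖) / 2 := by
    intro z hz
    rw [hval z]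
    have h1 : ‖(inner ℂ (A z.snd) z.fst : ℂ)‖ ≤ ‖T‖ * (‖z.snd‖ * ‖z.fst‖) := by
      calc ‖(inner ℂ (A z.snd) z.fst : ℂ)‖ = ‖(inner ℂ (A z.snd) z.fst : ℂ)‖ := rfl
        _ ≤ ‖A z.snd‖ * ‖z.fst‖ := norm_inner_le_norm _ _
        _ ≤ (‖A‖ * ‖z.snd‖) * ‖z.fst‖ := by
            gcongr; exact ContinuousLinearMap.le_opNorm _ _
        _ = ‖T‖ * (‖z.snd‖ * ‖z.fst‖) := by rw [hAn]; ring
    have h2 : ‖(inner ℂ (B z.fst) z.snd : ℂ)‖ ≤ ‖S‖ * (‖z.snd‖ * ‖z.fst‖) := by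
      calc ‖(inner ℂ (B z.fst) z.snd : ℂ)‖ = ‖(inner ℂ (B z.fst) z.snd : ℂ)‖ := rfl
        _ ≤ ‖B z.fst‖ * ‖z.snd‖ := norm_inner_le_norm _ _
        _ ≤ (‖B‖ * ‖z.fst‖) * ‖z.snd‖ := by
            gcongr; exact ContinuousLinearMap.le_opNorm _ _
        _ = ‖S‖ * (‖z.snd‖ * ‖z.fst‖) := by rw [hBn]; ring
    have hzsq : ‖z.fst‖ ^ 2 + ‖z.snd‖ ^ 2 = 1 := by
      rw [← WithLp.prod_norm_sq_eq_of_L2, hz]; norm_num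
    have hprod : ‖z.snd‖ * ‖z.fst‖ ≤ 1 / 2 := by
      nlinarith [sq_nonneg (‖z.fst‖ - ‖z.snd‖)]
    calc ‖(inner ℂ (A z.snd) z.fst + inner ℂ (B z.fst) z.snd : ℂ)‖
        ≤ ‖(inner ℂ (A z.snd) z.fst : ℂ)‖ + ‖(inner ℂ (B z.fst) z.snd : ℂ)‖ :=
          norm_add_le _ _
      _ ≤ (‖T‖ + ‖S‖) * (‖z.snd‖ * ‖z.fst‖) := by nlinarith [h1, h2]
      _ ≤ (‖T‖ + ‖S‖) / 2 := by nlinarith [norm_nonneg T, norm_nonneg S, hprod]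
  have hbdd : BddAbove {r : ℝ | ∃ x : WithLp 2 (H × H), ‖x‖ = 1
      ∧ r = ‖(inner ℂ (M x) x : ℂ)‖} := by
    refine ⟨(‖T‖ + ‖S‖) / 2, ?_⟩
    rintro r ⟨z, hz, rfl⟩
    exact hbound z hz
  have hupper : numRadius M ≤ (‖T‖ + ‖S‖) / 2 := by
    apply Real.sSup_le
    · rintro r ⟨z, hz, rfl⟩
      exact hbound z hz
    · positivity
  have hNnonneg : 0 ≤ numRadius M := by
    apply Real.sSup_nonneg
    rintro r ⟨z, hz, rfl⟩
    exact norm_nonneg _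
  -- lower bound
  set C : H →L[ℂ] H := T + Complex.exp (2 * θ * Complex.I) • S with hC
  have hlow : ∀ r : ℝ, r < ‖T‖ + ‖S‖ → r < 2 * numRadius M := by
    intro r hr
    rcases lt_or_ge r 0 with hr0 | hr0
    · linarith
    obtain ⟨x, hx1, hx2⟩ := ContinuousLinearMap.exists_lt_apply_of_lt_opNorm C (h ▸ hr)
    have hCx : C x ≠ 0 := by
      intro h0
      rw [h0, norm_zero] at hx2
      linarith
    have hx0 : x ≠ 0 := fun h0 => hCx (by rw [h0, map_zero])
    set y : H := (‖x‖⁻¹ : ℂ) • x with hy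
    have hyn : ‖y‖ = 1 := norm_smul_inv_norm hx0
    have hCy : r < ‖C y‖ := by
      have hCyx : C y = (‖x‖⁻¹ : ℂ) • C x := by rw [hy, map_smul]
      have hxpos : 0 < ‖x‖ := norm_pos_iff.mpr hx0
      have h1 : (1:ℝ) ≤ ‖x‖⁻¹ := one_le_inv_iff₀.mpr ⟨hxpos, hx1.le⟩
      have hnrm : ‖((‖x‖ : ℂ))⁻¹‖ = ‖x‖⁻¹ := by
        rw [norm_inv, Complex.norm_real, Real.norm_eq_abs, _root_.abs_of_nonneg (norm_nonneg x)]
      rw [hCyx, norm_smul, hnrm]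
      calc r < ‖C x‖ := hx2
        _ = 1 * ‖C x‖ := by ring
        _ ≤ ‖x‖⁻¹ * ‖C x‖ := by gcongr
    set u : H := C y with hu
    have hu0 : u ≠ 0 := by
      intro h0
      rw [h0, norm_zero] at hCy
      linarith
    have hun : 0 < ‖u‖ := norm_pos_iff.mpr hu0
    set x₀ : H := (‖u‖⁻¹ : ℂ) • u with hx₀
    have hx₀n : ‖x₀‖ = 1 := norm_smul_inv_norm hu0
    set a : ℂ := inner ℂ x₀ (T y) with ha
    set b : ℂ := inner ℂ x₀ (S y) with hb
    have hsum : (‖u‖ : ℂ) = a + Complex.exp (2 * θ * Complex.I) * b := by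
      have h1 : (inner ℂ x₀ u : ℂ) = (‖u‖ : ℂ) := by
        rw [hx₀, inner_smul_left, inner_self_eq_norm_sq_to_K]
        rw [map_inv₀, Complex.conj_ofReal]
        change ((‖u‖:ℝ):ℂ)⁻¹ * ((‖u‖:ℝ):ℂ)^2 = ((‖u‖:ℝ):ℂ)
        rw [← Complex.ofReal_pow, ← Complex.ofReal_inv, ← Complex.ofReal_mul]
        congr 1
        rw [sq, ← mul_assoc, inv_mul_cancel₀ hun.ne', one_mul]
      have h2 : (inner ℂ x₀ u : ℂ) = a + Complex.exp (2 * θ * Complex.I) * b := by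
        rw [hu, hC]
        simp only [ContinuousLinearMap.add_apply, ContinuousLinearMap.smul_apply,
          inner_add_right, inner_smul_right]
        rfl
      rw [← h1, h2]
    have habs : ‖u‖ ≤ ‖a‖ + ‖b‖ := by
      have h3 := congrArg (norm : ℂ → ℝ) hsum
      rw [Complex.norm_real, Real.norm_eq_abs, abs_of_nonneg hun.le] at h3
      calc ‖u‖ = ‖(a + Complex.exp (2 * θ * Complex.I) * b)‖ := h3
        _ ≤ ‖a‖ + ‖(Complex.exp (2 * θ * Complex.I) * b)‖ :=
            norm_add_le _ _
        _ = ‖a‖ + ‖b‖ := by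
            rw [norm_mul, Complex.norm_exp]
            norm_num
    clear_value b a x₀ u y
    obtain ⟨μ, hμ1, hμ2⟩ := phase_lemma b ((starRingEnd ℂ) a)
    set lam : ℂ := μ * eθ⁻¹ with hlam
    set s : ℂ := (((Real.sqrt 2)⁻¹ : ℝ) : ℂ) with hs
    have hconj_s : (starRingEnd ℂ) s = s := by rw [hs]; exact Complex.conj_ofReal _
    have hss : s * s = (1/2 : ℂ) := by
      rw [hs, ← Complex.ofReal_mul, ← mul_inv, Real.mul_self_sqrt (by norm_num : (0:ℝ) ≤ 2)]
      norm_num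
    set z : WithLp 2 (H × H) := (WithLp.equiv 2 (H × H)).symm (s • x₀, (s * lam) • y) with hz
    have hzfst : z.fst = s • x₀ := rfl
    have hzsnd : z.snd = (s * lam) • y := rfl
    have hs_abs : ‖s‖ = (Real.sqrt 2)⁻¹ := by
      rw [hs, Complex.norm_real, Real.norm_eq_abs, abs_of_nonneg (by positivity)]
    have hlam_abs : ‖lam‖ = 1 := by
      rw [hlam, norm_mul, norm_inv, heθ_abs, hμ1]
      norm_num
    have hzn : ‖z‖ = 1 := by
      have hsq : ‖z‖ ^ 2 = 1 := by
        rw [WithLp.prod_norm_sq_eq_of_L2, hzfst, hzsnd, norm_smul, norm_smul, hx₀n, hyn,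
          norm_mul, hs_abs, hlam_abs]
        simp only [mul_one]
        rw [inv_pow, Real.sq_sqrt (by norm_num : (0:ℝ) ≤ 2)]
        norm_num
      calc ‖z‖ = Real.sqrt (‖z‖ ^ 2) := (Real.sqrt_sq (norm_nonneg z)).symm
        _ = 1 := by rw [hsq]; norm_num
    -- compute the inner product
    have hAy : (inner ℂ (A y) x₀ : ℂ) = eθ⁻¹ * (starRingEnd ℂ) a := by
      rw [hA]
      simp only [ContinuousLinearMap.smul_apply]
      rw [inner_smul_left, hconj_eθ]
      congr 1
      rw [ha, ← inner_conj_symm]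
    have hBx : (inner ℂ (B x₀) y : ℂ) = eθ * b := by
      rw [hB]
      simp only [ContinuousLinearMap.smul_apply]
      rw [inner_smul_left, hneg, ContinuousLinearMap.adjoint_inner_left,
        map_inv₀, hconj_eθ, inv_inv, hb]
    have hAz : A z.snd = (s * lam) • A y := by rw [hzsnd, map_smul]
    have hBz : B z.fst = s • B x₀ := by rw [hzfst, map_smul]
    have hconj_lam : (starRingEnd ℂ) lam = (starRingEnd ℂ) μ * eθ := by
      rw [hlam, map_mul, map_inv₀, hconj_eθ, inv_inv]
    have e1 : (inner ℂ (M z) z : ℂ)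
        = (s * s) * ((starRingEnd ℂ) μ * (eθ * eθ⁻¹) * (starRingEnd ℂ) a
            + μ * (eθ⁻¹ * eθ) * b) := by
      rw [hval z, hAz, hBz, inner_smul_left, inner_smul_left]
      rw [hzfst, hzsnd, inner_smul_right, inner_smul_right]
      rw [hAy, hBx, map_mul, hconj_s, hconj_lam, hlam]
      ring
    have hinner : (inner ℂ (M z) z : ℂ)
        = (1/2 : ℂ) * (μ * b + (starRingEnd ℂ) μ * (starRingEnd ℂ) a) := by
      rw [e1, mul_inv_cancel₀ heθ_ne, inv_mul_cancel₀ heθ_ne, hss]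
      ring
    have hNge : (‖a‖ + ‖b‖) / 2 ≤ numRadius M := by
      have hmem : ‖(inner ℂ (M z) z : ℂ)‖ ∈ {r : ℝ | ∃ x : WithLp 2 (H × H), ‖x‖ = 1
          ∧ r = ‖(inner ℂ (M x) x : ℂ)‖} := ⟨z, hzn, rfl⟩
      have hle := le_csSup hbdd hmem
      have heq : ‖(inner ℂ (M z) z : ℂ)‖ = (‖a‖ + ‖b‖) / 2 := by
        rw [hinner, norm_mul, hμ2, Complex.norm_conj]
        have : ‖(1/2 : ℂ)‖ = 1/2 := by norm_num
        rw [this]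
        ring
      rw [← heq]
      exact hle
    have hfin : r / 2 < numRadius M := by
      calc r / 2 < ‖u‖ / 2 := by linarith
        _ ≤ (‖a‖ + ‖b‖) / 2 := by linarith
        _ ≤ numRadius M := hNge
    linarith
  have hlower : ‖T‖ + ‖S‖ ≤ 2 * numRadius M := le_of_forall_lt fun r hr => hlow r hr
  exact le_antisymm hupper (by linarith)
end
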